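/- arXiv:2102.05570 — 4 statements merged into one kernel-verified Lean document; each statement's English description precedes it below -/
import Mathlib

section
/- If ν is a full-support distribution over linear orders on X with |X| ≥ 4, then there exists a distribution ν' ≠ ν over linear orders inducing the same system of choice probabilities as ν. -/
open Finset
open scoped Classical

/-- A linear order on a finite set `α`, encoded as a ranking bijection to `Fin (card α)`;
higher value means more preferred. -/
abbrev RankOrd (α : Type*) [Fintype α] := α ≃ Fin (Fintype.card α)

variable {α : Type*} [Fintype α] [DecidableEq α]

/-- `ν` is a probability distribution over linear orders. -/
def IsDist [Fintype α] (ν : RankOrd α → ℝ) : Prop :=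
  (∀ π, 0 ≤ ν π) ∧ ∑ π : RankOrd α, ν π = 1

/-- The choice probabilities induced by a distribution over linear orders. -/
noncomputable def choiceProb (ν : RankOrd α → ℝ) (A : Finset α) (x : α) : ℝ :=
  ∑ π : RankOrd α, if ∀ y ∈ A, y ≠ x → (π y : ℕ) < (π x : ℕ) then ν π else 0

/-- `ν` rationalizes the system of choice probabilities `P`. -/
def Rationalizes (ν : RankOrd α → ℝ) (P : Finset α → α → ℝ) : Prop :=
  IsDist ν ∧ ∀ A : Finset α, A.Nonempty → ∀ x ∈ A, P A x = choiceProb ν A x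

/-- The Block–Marschak polynomial `q(x,A)` of a system of choice probabilities `P`. -/
noncomputable def bm (P : Finset α → α → ℝ) (x : α) (A : Finset α) : ℝ :=
  ∑ A' ∈ Finset.univ.powerset.filter (fun A' => A ⊆ A'),
    (-1 : ℝ) ^ (A' \ A).card * P A' x

/-- A path: a maximal chain `X = A_0 ⊋ A_1 ⊋ ⋯ ⊋ A_{|X|} = ∅` decreasing by one element. -/
def IsPath (ρ : ℕ → Finset α) : Prop :=
  ρ 0 = Finset.univ ∧ ρ (Fintype.card α) = ∅ ∧
    ∀ i < Fintype.card α, ρ (i + 1) ⊆ ρ i ∧ (ρ i \ ρ (i + 1)).card = 1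

/-- A supported path: all Block–Marschak edge weights along it are strictly positive. -/
def SupportedPath (P : Finset α → α → ℝ) (ρ : ℕ → Finset α) : Prop :=
  IsPath ρ ∧ ∀ i < Fintype.card α, ∀ x ∈ ρ i \ ρ (i + 1), 0 < bm P x (ρ i)

/-- Two paths are branching: they agree on a consecutive block of nodes
`{i,…,j} ⊆ {1,…,|X|-1}` while differing at positions `i-1` and `j+1`. -/
def BranchingPair (ρ ρ' : ℕ → Finset α) : Prop :=
  ∃ i j, 1 ≤ i ∧ i ≤ j ∧ j ≤ Fintype.card α - 1 ∧
    ρ (i - 1) ≠ ρ' (i - 1) ∧ ρ (j + 1) ≠ ρ' (j + 1) ∧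
    ∀ m, i ≤ m → m ≤ j → ρ m = ρ' m

/-- The path associated with the linear order `π`: `A_i` is `X` minus the top `i` elements. -/
def pathOf (π : RankOrd α) : ℕ → Finset α :=
  fun i => Finset.univ.filter (fun w => (π w : ℕ) < Fintype.card α - i)

/-- The weak upper contour set of `x` according to `π`. -/
def upper (π : RankOrd α) (x : α) : Finset α :=
  Finset.univ.filter (fun w => (π x : ℕ) ≤ (π w : ℕ))

/-- `π ∈ M_{x,A}`: `π` ranks `X \ A` above `x` and `x` above `A \ {x}`. -/
def inM (π : RankOrd α) (x : α) (A : Finset α) : Prop :=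
  (∀ z, z ∉ A → (π x : ℕ) < (π z : ℕ)) ∧ ∀ y ∈ A, y ≠ x → (π y : ℕ) < (π x : ℕ)

/-- Swapping two elements that compare to `x` in the same way does not change
whether `x` is maximal in `A`. -/
private lemma cond_swap_iff {α : Type*} [DecidableEq α] (f : α → ℕ) (A : Finset α)
    (x a b : α) (hxa : x ≠ a) (hxb : x ≠ b) (hab : f a < f x ↔ f b < f x) :
    (∀ y ∈ A, y ≠ x → f y < f x) ↔
      (∀ y ∈ A, y ≠ x → f (Equiv.swap a b y) < f (Equiv.swap a b x)) := by
  rw [Equiv.swap_apply_of_ne_of_ne hxa hxb]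
  constructor <;> intro h y hy hyx
  · rcases eq_or_ne y a with rfl | hya
    · rw [Equiv.swap_apply_left]
      exact hab.mp (h _ hy hyx)
    rcases eq_or_ne y b with rfl | hyb
    · rw [Equiv.swap_apply_right]
      exact hab.mpr (h _ hy hyx)
    · rw [Equiv.swap_apply_of_ne_of_ne hya hyb]
      exact h _ hy hyx
  · rcases eq_or_ne y a with rfl | hya
    · have := h _ hy hyx
      rw [Equiv.swap_apply_left] at this
      exact hab.mpr this
    rcases eq_or_ne y b with rfl | hyb
    · have := h _ hy hyx
      rw [Equiv.swap_apply_right] at this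
      exact hab.mp this
    · have := h _ hy hyx
      rwa [Equiv.swap_apply_of_ne_of_ne hya hyb] at this

private lemma comb_lemma {β : Type*} [DecidableEq β] (p : β → Prop) [DecidablePred p]
    (ε : ℝ) (σ τ : β) :
    (if p τ then (if τ = σ then ε else 0) else 0)
      = (if τ = σ then (if p σ then ε else 0) else 0) := by
  rcases eq_or_ne τ σ with rfl | hne
  · simp
  · simp [hne]

/-- A full-support distribution over linear orders on a set with at least four elements is
observationally equivalent to some other distribution. -/
theorem full_support_not_unique {α : Type*} [Fintype α] [DecidableEq α]
    (h : 4 ≤ Fintype.card α) (ν : RankOrd α → ℝ) (hν : IsDist ν)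
    (hfull : ∀ π : RankOrd α, 0 < ν π) :
    ∃ ν' : RankOrd α → ℝ, IsDist ν' ∧ ν' ≠ ν ∧
      ∀ A : Finset α, ∀ x ∈ A, choiceProb ν' A x = choiceProb ν A x := by
  classical
  have h1 : Fintype.card α - 1 < Fintype.card α := by omega
  have h2 : Fintype.card α - 2 < Fintype.card α := by omega
  have h3 : (1 : ℕ) < Fintype.card α := by omega
  have h0 : (0 : ℕ) < Fintype.card α := by omega
  set e : RankOrd α := Fintype.equivFin α with he
  set a := e.symm ⟨Fintype.card α - 1, h1⟩ with ha
  set b := e.symm ⟨Fintype.card α - 2, h2⟩ with hb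
  set c := e.symm ⟨1, h3⟩ with hc
  set d := e.symm ⟨0, h0⟩ with hd
  have vea : (e a : ℕ) = Fintype.card α - 1 := by rw [ha]; simp
  have veb : (e b : ℕ) = Fintype.card α - 2 := by rw [hb]; simp
  have vec : (e c : ℕ) = 1 := by rw [hc]; simp
  have ved : (e d : ℕ) = 0 := by rw [hd]; simp
  have hinj : ∀ {u v : α}, (e u : ℕ) = (e v : ℕ) → u = v := fun hh =>
    e.injective (Fin.ext hh)
  have hab : a ≠ b := fun hh => by
    have := congrArg (fun z => (e z : ℕ)) hh; simp only [vea, veb] at this; omega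
  have hac : a ≠ c := fun hh => by
    have := congrArg (fun z => (e z : ℕ)) hh; simp only [vea, vec] at this; omega
  have had : a ≠ d := fun hh => by
    have := congrArg (fun z => (e z : ℕ)) hh; simp only [vea, ved] at this; omega
  have hbc : b ≠ c := fun hh => by
    have := congrArg (fun z => (e z : ℕ)) hh; simp only [veb, vec] at this; omega
  have hbd : b ≠ d := fun hh => by
    have := congrArg (fun z => (e z : ℕ)) hh; simp only [veb, ved] at this; omega
  have hcd : c ≠ d := fun hh => by
    have := congrArg (fun z => (e z : ℕ)) hh; simp only [vec, ved] at this; omega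
  set s1 := Equiv.swap a b with hs1
  set s2 := Equiv.swap c d with hs2
  have s1a : s1 a = b := Equiv.swap_apply_left a b
  have s1b : s1 b = a := Equiv.swap_apply_right a b
  have s1c : s1 c = c := Equiv.swap_apply_of_ne_of_ne (Ne.symm hac) (Ne.symm hbc)
  have s1d : s1 d = d := Equiv.swap_apply_of_ne_of_ne (Ne.symm had) (Ne.symm hbd)
  have s2a : s2 a = a := Equiv.swap_apply_of_ne_of_ne hac had
  have s2b : s2 b = b := Equiv.swap_apply_of_ne_of_ne hbc hbd
  have s2c : s2 c = d := Equiv.swap_apply_left c d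
  have s2d : s2 d = c := Equiv.swap_apply_right c d
  have hcomm : ∀ y, s2 (s1 y) = s1 (s2 y) := by
    intro y
    rcases eq_or_ne y a with rfl | ya
    · rw [s1a, s2b, s2a, s1a]
    rcases eq_or_ne y b with rfl | yb
    · rw [s1b, s2a, s2b, s1b]
    rcases eq_or_ne y c with rfl | yc
    · rw [s1c, s2c, s1d]
    rcases eq_or_ne y d with rfl | yd
    · rw [s1d, s2d, s1c]
    · simp only [show s1 y = y from Equiv.swap_apply_of_ne_of_ne ya yb,
        show s2 y = y from Equiv.swap_apply_of_ne_of_ne yc yd]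
  -- the four perturbed orders
  set p1 : RankOrd α := e with hp1
  set p2 : RankOrd α := s1.trans e with hp2
  set p3 : RankOrd α := s2.trans e with hp3
  set p4 : RankOrd α := s2.trans (s1.trans e) with hp4
  have vp1a : (p1 a : ℕ) = Fintype.card α - 1 := vea
  have vp1b : (p1 b : ℕ) = Fintype.card α - 2 := veb
  have vp1c : (p1 c : ℕ) = 1 := vec
  have vp1d : (p1 d : ℕ) = 0 := ved
  have vp2a : (p2 a : ℕ) = Fintype.card α - 2 := by
    show ((e (s1 a) : Fin (Fintype.card α)) : ℕ) = _; rw [s1a]; exact veb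
  have vp2b : (p2 b : ℕ) = Fintype.card α - 1 := by
    show ((e (s1 b) : Fin (Fintype.card α)) : ℕ) = _; rw [s1b]; exact vea
  have vp2c : (p2 c : ℕ) = 1 := by
    show ((e (s1 c) : Fin (Fintype.card α)) : ℕ) = _; rw [s1c]; exact vec
  have vp2d : (p2 d : ℕ) = 0 := by
    show ((e (s1 d) : Fin (Fintype.card α)) : ℕ) = _; rw [s1d]; exact ved
  have vp3a : (p3 a : ℕ) = Fintype.card α - 1 := by
    show ((e (s2 a) : Fin (Fintype.card α)) : ℕ) = _; rw [s2a]; exact vea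
  have vp3b : (p3 b : ℕ) = Fintype.card α - 2 := by
    show ((e (s2 b) : Fin (Fintype.card α)) : ℕ) = _; rw [s2b]; exact veb
  have vp3c : (p3 c : ℕ) = 0 := by
    show ((e (s2 c) : Fin (Fintype.card α)) : ℕ) = _; rw [s2c]; exact ved
  have vp4a : (p4 a : ℕ) = Fintype.card α - 2 := by
    show ((e (s1 (s2 a)) : Fin (Fintype.card α)) : ℕ) = _; rw [s2a, s1a]; exact veb
  have vp4c : (p4 c : ℕ) = 0 := by
    show ((e (s1 (s2 c)) : Fin (Fintype.card α)) : ℕ) = _; rw [s2c, s1d]; exact ved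
  -- the four orders are pairwise distinct
  have n12 : p1 ≠ p2 := fun hh => by
    have : (p1 a : ℕ) = (p2 a : ℕ) := by rw [hh]
    rw [vp1a, vp2a] at this; omega
  have n13 : p1 ≠ p3 := fun hh => by
    have : (p1 c : ℕ) = (p3 c : ℕ) := by rw [hh]
    rw [vp1c, vp3c] at this; omega
  have n14 : p1 ≠ p4 := fun hh => by
    have : (p1 a : ℕ) = (p4 a : ℕ) := by rw [hh]
    rw [vp1a, vp4a] at this; omega
  have n23 : p2 ≠ p3 := fun hh => by
    have : (p2 a : ℕ) = (p3 a : ℕ) := by rw [hh]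
    rw [vp2a, vp3a] at this; omega
  have n24 : p2 ≠ p4 := fun hh => by
    have : (p2 c : ℕ) = (p4 c : ℕ) := by rw [hh]
    rw [vp2c, vp4c] at this; omega
  have n34 : p3 ≠ p4 := fun hh => by
    have : (p3 a : ℕ) = (p4 a : ℕ) := by rw [hh]
    rw [vp3a, vp4a] at this; omega
  set eps := min (ν p2) (ν p3) with hepsdef
  have heps : 0 < eps := lt_min (hfull p2) (hfull p3)
  have heps2 : eps ≤ ν p2 := min_le_left _ _
  have heps3 : eps ≤ ν p3 := min_le_right _ _
  set F : RankOrd α → ℝ := fun τ => ν τ + ((if τ = p1 then eps else 0) + (if τ = p4 then eps else 0)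
      - (if τ = p2 then eps else 0) - (if τ = p3 then eps else 0)) with hF
  refine ⟨F, ⟨?_, ?_⟩, ?_, ?_⟩
  · -- nonnegativity
    intro τ
    simp only [hF]
    rcases eq_or_ne τ p1 with rfl | t1
    · rw [if_pos rfl, if_neg n14, if_neg n12, if_neg n13]
      have := hν.1 p1; linarith
    rcases eq_or_ne τ p2 with rfl | t2
    · rw [if_neg (Ne.symm n12), if_neg n24, if_pos rfl, if_neg n23]
      linarith
    rcases eq_or_ne τ p3 with rfl | t3
    · rw [if_neg (Ne.symm n13), if_neg n34, if_neg (Ne.symm n23), if_pos rfl]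
      linarith
    rcases eq_or_ne τ p4 with rfl | t4
    · rw [if_neg (Ne.symm n14), if_pos rfl, if_neg (Ne.symm n24), if_neg (Ne.symm n34)]
      have := hν.1 p4; linarith
    · rw [if_neg t1, if_neg t4, if_neg t2, if_neg t3]
      have := hν.1 τ; linarith
  · -- sums to one
    simp only [hF]
    rw [Finset.sum_add_distrib, hν.2]
    have e1 : (∑ τ : RankOrd α, if τ = p1 then eps else 0) = eps := by
      simp [Finset.sum_ite_eq']
    have e2 : (∑ τ : RankOrd α, if τ = p2 then eps else 0) = eps := by
      simp [Finset.sum_ite_eq']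
    have e3 : (∑ τ : RankOrd α, if τ = p3 then eps else 0) = eps := by
      simp [Finset.sum_ite_eq']
    have e4 : (∑ τ : RankOrd α, if τ = p4 then eps else 0) = eps := by
      simp [Finset.sum_ite_eq']
    rw [Finset.sum_sub_distrib, Finset.sum_sub_distrib, Finset.sum_add_distrib, e1, e2, e3, e4]
    ring
  · -- different from ν
    intro hh
    have h1' := congrFun hh p1
    simp only [hF, if_pos, if_neg n14, if_neg n12, if_neg n13, if_true] at h1'
    linarith
  · -- same choice probabilities
    intro A x hx
    -- the key cancellation
    have key : (if (∀ y ∈ A, y ≠ x → (p1 y : ℕ) < (p1 x : ℕ)) then eps else 0)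
        + (if (∀ y ∈ A, y ≠ x → (p4 y : ℕ) < (p4 x : ℕ)) then eps else 0)
        = (if (∀ y ∈ A, y ≠ x → (p2 y : ℕ) < (p2 x : ℕ)) then eps else 0)
        + (if (∀ y ∈ A, y ≠ x → (p3 y : ℕ) < (p3 x : ℕ)) then eps else 0) := by
      by_cases hxab : x = a ∨ x = b
      · -- x is among the top two: swapping c and d is invisible
        have hxc : x ≠ c := by rcases hxab with rfl | rfl; exacts [hac, hbc]
        have hxd : x ≠ d := by rcases hxab with rfl | rfl; exacts [had, hbd]
        have big1 : 1 < (p1 x : ℕ) := by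
          rcases hxab with rfl | rfl
          · rw [vp1a]; omega
          · rw [vp1b]; omega
        have big2 : 1 < (p2 x : ℕ) := by
          rcases hxab with rfl | rfl
          · rw [vp2a]; omega
          · rw [vp2b]; omega
        have iff13 : (∀ y ∈ A, y ≠ x → (p1 y : ℕ) < (p1 x : ℕ)) ↔
            (∀ y ∈ A, y ≠ x → (p3 y : ℕ) < (p3 x : ℕ)) :=
          cond_swap_iff (fun z => ((p1 z : Fin (Fintype.card α)) : ℕ)) A x c d hxc hxd
            (iff_of_true (by show (p1 c : ℕ) < (p1 x : ℕ); rw [vp1c]; exact big1)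
              (by show (p1 d : ℕ) < (p1 x : ℕ); rw [vp1d]; omega))
        have iff24 : (∀ y ∈ A, y ≠ x → (p2 y : ℕ) < (p2 x : ℕ)) ↔
            (∀ y ∈ A, y ≠ x → (p4 y : ℕ) < (p4 x : ℕ)) :=
          cond_swap_iff (fun z => ((p2 z : Fin (Fintype.card α)) : ℕ)) A x c d hxc hxd
            (iff_of_true (by show (p2 c : ℕ) < (p2 x : ℕ); rw [vp2c]; exact big2)
              (by show (p2 d : ℕ) < (p2 x : ℕ); rw [vp2d]; omega))
        rw [if_congr iff13 rfl rfl, if_congr iff24 rfl rfl]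
        ring
      · -- x is not among the top two: swapping a and b is invisible
        push_neg at hxab
        obtain ⟨hxa, hxb⟩ := hxab
        have small1 : (p1 x : ℕ) < Fintype.card α - 2 := by
          have hne1 : (p1 x : ℕ) ≠ Fintype.card α - 1 := fun hh =>
            hxa (hinj (by rw [hh, vea]))
          have hne2 : (p1 x : ℕ) ≠ Fintype.card α - 2 := fun hh =>
            hxb (hinj (by rw [hh, veb]))
          have := (p1 x).isLt
          omega
        have hsa : s2 x ≠ a := fun hh => hxa (s2.injective (hh.trans s2a.symm))
        have hsb : s2 x ≠ b := fun hh => hxb (s2.injective (hh.trans s2b.symm))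
        have small3 : (p3 x : ℕ) < Fintype.card α - 2 := by
          have hne1 : ((e (s2 x) : Fin (Fintype.card α)) : ℕ) ≠ Fintype.card α - 1 := fun hh =>
            hsa (hinj (by rw [hh, vea]))
          have hne2 : ((e (s2 x) : Fin (Fintype.card α)) : ℕ) ≠ Fintype.card α - 2 := fun hh =>
            hsb (hinj (by rw [hh, veb]))
          have hlt := (p3 x).isLt
          show ((e (s2 x) : Fin (Fintype.card α)) : ℕ) < Fintype.card α - 2
          omega
        have iff12 : (∀ y ∈ A, y ≠ x → (p1 y : ℕ) < (p1 x : ℕ)) ↔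
            (∀ y ∈ A, y ≠ x → (p2 y : ℕ) < (p2 x : ℕ)) :=
          cond_swap_iff (fun z => ((p1 z : Fin (Fintype.card α)) : ℕ)) A x a b hxa hxb
            (iff_of_false (by show ¬((p1 a : ℕ) < (p1 x : ℕ)); rw [vp1a]; omega)
              (by show ¬((p1 b : ℕ) < (p1 x : ℕ)); rw [vp1b]; omega))
        have base34 := cond_swap_iff (fun z => ((p3 z : Fin (Fintype.card α)) : ℕ)) A x a b hxa hxb
            (iff_of_false (by show ¬((p3 a : ℕ) < (p3 x : ℕ)); rw [vp3a]; omega)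
              (by show ¬((p3 b : ℕ) < (p3 x : ℕ)); rw [vp3b]; omega))
        have iff34 : (∀ y ∈ A, y ≠ x → (p3 y : ℕ) < (p3 x : ℕ)) ↔
            (∀ y ∈ A, y ≠ x → (p4 y : ℕ) < (p4 x : ℕ)) := by
          constructor
          · intro hh y hy hyx
            have h' := (base34.mp hh) y hy hyx
            show ((e (s1 (s2 y)) : Fin (Fintype.card α)) : ℕ)
              < ((e (s1 (s2 x)) : Fin (Fintype.card α)) : ℕ)
            rw [← hcomm y, ← hcomm x]
            exact h'
          · intro hh
            refine base34.mpr ?_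
            intro y hy hyx
            have h' := hh y hy hyx
            show ((e (s2 (s1 y)) : Fin (Fintype.card α)) : ℕ)
              < ((e (s2 (s1 x)) : Fin (Fintype.card α)) : ℕ)
            rw [hcomm y, hcomm x]
            exact h'
        rw [if_congr iff12 rfl rfl, if_congr iff34 rfl rfl]
    -- expand the perturbed choice probability
    have expand : ∀ τ : RankOrd α,
        (if (∀ y ∈ A, y ≠ x → (τ y : ℕ) < (τ x : ℕ)) then
          ν τ + ((if τ = p1 then eps else 0) + (if τ = p4 then eps else 0)
            - (if τ = p2 then eps else 0) - (if τ = p3 then eps else 0)) else 0)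
        = (if (∀ y ∈ A, y ≠ x → (τ y : ℕ) < (τ x : ℕ)) then ν τ else 0)
          + ((if τ = p1 then (if (∀ y ∈ A, y ≠ x → (p1 y : ℕ) < (p1 x : ℕ)) then eps else 0) else 0)
           + (if τ = p4 then (if (∀ y ∈ A, y ≠ x → (p4 y : ℕ) < (p4 x : ℕ)) then eps else 0) else 0)
           - (if τ = p2 then (if (∀ y ∈ A, y ≠ x → (p2 y : ℕ) < (p2 x : ℕ)) then eps else 0) else 0)
           - (if τ = p3 then (if (∀ y ∈ A, y ≠ x → (p3 y : ℕ) < (p3 x : ℕ)) then eps else 0) else 0)) := by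
      intro τ
      by_cases hC : (∀ y ∈ A, y ≠ x → (τ y : ℕ) < (τ x : ℕ))
      · have step : ∀ σ : RankOrd α,
            (if τ = σ then (if (∀ y ∈ A, y ≠ x → (σ y : ℕ) < (σ x : ℕ)) then eps else 0) else 0)
              = (if τ = σ then eps else 0) := by
          intro σ
          rcases eq_or_ne τ σ with rfl | hne
          · rw [if_pos rfl, if_pos rfl, if_pos hC]
          · rw [if_neg hne, if_neg hne]
        rw [if_pos hC, if_pos hC, step p1, step p4, step p2, step p3]
      · have step : ∀ σ : RankOrd α,
            (if τ = σ then (if (∀ y ∈ A, y ≠ x → (σ y : ℕ) < (σ x : ℕ)) then eps else 0) else 0)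
              = 0 := by
          intro σ
          rcases eq_or_ne τ σ with rfl | hne
          · rw [if_pos rfl, if_neg hC]
          · rw [if_neg hne]
        rw [if_neg hC, if_neg hC, step p1, step p4, step p2, step p3]
        ring
    show (∑ τ : RankOrd α, if (∀ y ∈ A, y ≠ x → (τ y : ℕ) < (τ x : ℕ)) then
        ν τ + ((if τ = p1 then eps else 0) + (if τ = p4 then eps else 0)
          - (if τ = p2 then eps else 0) - (if τ = p3 then eps else 0)) else 0)
      = choiceProb ν A x
    rw [Finset.sum_congr rfl (fun τ _ => expand τ), Finset.sum_add_distrib]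
    have e1 : (∑ τ : RankOrd α, if τ = p1 then
        (if (∀ y ∈ A, y ≠ x → (p1 y : ℕ) < (p1 x : ℕ)) then eps else 0) else 0)
        = (if (∀ y ∈ A, y ≠ x → (p1 y : ℕ) < (p1 x : ℕ)) then eps else 0) := by
      simp [Finset.sum_ite_eq']
    have e2 : (∑ τ : RankOrd α, if τ = p2 then
        (if (∀ y ∈ A, y ≠ x → (p2 y : ℕ) < (p2 x : ℕ)) then eps else 0) else 0)
        = (if (∀ y ∈ A, y ≠ x → (p2 y : ℕ) < (p2 x : ℕ)) then eps else 0) := by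
      simp [Finset.sum_ite_eq']
    have e3 : (∑ τ : RankOrd α, if τ = p3 then
        (if (∀ y ∈ A, y ≠ x → (p3 y : ℕ) < (p3 x : ℕ)) then eps else 0) else 0)
        = (if (∀ y ∈ A, y ≠ x → (p3 y : ℕ) < (p3 x : ℕ)) then eps else 0) := by
      simp [Finset.sum_ite_eq']
    have e4 : (∑ τ : RankOrd α, if τ = p4 then
        (if (∀ y ∈ A, y ≠ x → (p4 y : ℕ) < (p4 x : ℕ)) then eps else 0) else 0)
        = (if (∀ y ∈ A, y ≠ x → (p4 y : ℕ) < (p4 x : ℕ)) then eps else 0) := by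
      simp [Finset.sum_ite_eq']
    rw [Finset.sum_sub_distrib, Finset.sum_sub_distrib, Finset.sum_add_distrib, e1, e2, e3, e4]
    show choiceProb ν A x + _ = choiceProb ν A x
    rw [show ∀ r s : ℝ, r + s = r ↔ s = 0 from fun r s => by constructor <;> intro <;> linarith]
    linarith [key]
end

section
/- If every Block–Marschak polynomial of a rationalizable system of choice probabilities (X,P) with |X| ≥ 4 is strictly positive, then the rationalizing distribution is not unique. -/
open Finset
open scoped Classical

variable {α : Type*} [Fintype α] [DecidableEq α]

section Auxiliary

set_option linter.unusedSectionVars false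

/-- The set of the `t` lowest-ranked elements according to `τ`. -/
def Sset (τ : RankOrd α) (t : ℕ) : Finset α := univ.filter (fun w => (τ w : ℕ) < t)

lemma mem_Sset {τ : RankOrd α} {t : ℕ} {w : α} : w ∈ Sset τ t ↔ (τ w : ℕ) < t := by
  simp [Sset]

lemma Sset_card (τ : RankOrd α) {t : ℕ} (ht : t ≤ Fintype.card α) : (Sset τ t).card = t := by
  have h1 : (Sset τ t).image (fun w => (τ w : ℕ)) = Finset.range t := by
    ext a
    simp only [Finset.mem_image, mem_Sset, Finset.mem_range]
    constructor
    · rintro ⟨w, hw, rfl⟩; exact hw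
    · intro ha
      exact ⟨τ.symm ⟨a, lt_of_lt_of_le ha ht⟩, by simp [ha], by simp⟩
  have h2 : ((Sset τ t).image (fun w => (τ w : ℕ))).card = (Sset τ t).card := by
    apply Finset.card_image_of_injective
    intro a b hab
    exact τ.injective (Fin.val_injective hab)
  rw [← h2, h1, Finset.card_range]

/-- The weak lower contour set of `x` according to `τ`. -/
noncomputable def lowerSet (τ : RankOrd α) (x : α) : Finset α := Sset τ ((τ x : ℕ) + 1)

lemma mem_lowerSet {τ : RankOrd α} {x w : α} :
    w ∈ lowerSet τ x ↔ (τ w : ℕ) ≤ (τ x : ℕ) := by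
  simp [lowerSet, mem_Sset, Nat.lt_succ_iff]

lemma val_eq_iff {τ : RankOrd α} {w x : α} : (τ w : ℕ) = (τ x : ℕ) ↔ w = x :=
  ⟨fun h => τ.injective (Fin.val_injective h), fun h => h ▸ rfl⟩

lemma cond_iff_subset (C : Finset α) (x : α) (τ : RankOrd α) :
    (∀ y ∈ C, y ≠ x → (τ y : ℕ) < (τ x : ℕ)) ↔ C ⊆ lowerSet τ x := by
  constructor
  · intro h y hy
    rw [mem_lowerSet]
    by_cases hyx : y = x
    · exact le_of_eq (hyx ▸ rfl)
    · exact le_of_lt (h y hy hyx)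
  · intro h y hy hyx
    have := mem_lowerSet.mp (h hy)
    exact lt_of_le_of_ne this (fun he => hyx (val_eq_iff.mp he))

lemma rank_of_lower {π : RankOrd α} {x : α} {A : Finset α} (h : lowerSet π x = A) :
    (π x : ℕ) + 1 = A.card := by
  rw [← h]
  exact (Sset_card π (π x).isLt).symm

lemma Sset_of_lower {π : RankOrd α} {x : α} {A : Finset α} (h : lowerSet π x = A) :
    Sset π A.card = A ∧ Sset π (A.card - 1) = A \ {x} := by
  have hr := rank_of_lower h
  constructor
  · rw [← hr]; exact h
  · have hr' : A.card - 1 = (π x : ℕ) := by omega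
    rw [hr']
    ext w
    simp only [mem_Sset, Finset.mem_sdiff, Finset.mem_singleton, ← h, mem_lowerSet]
    constructor
    · intro hw
      refine ⟨le_of_lt hw, fun he => ?_⟩
      subst he; exact lt_irrefl _ hw
    · intro ⟨hle, hne⟩
      exact lt_of_le_of_ne hle (fun he => hne (val_eq_iff.mp he))

lemma alt_sum (A L : Finset α) :
    (∑ A' ∈ Finset.univ.powerset.filter (fun A' => A ⊆ A' ∧ A' ⊆ L),
      (-1 : ℝ) ^ (A' \ A).card) = if L = A then 1 else 0 := by
  by_cases hAL : A ⊆ L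
  · have key : (∑ A' ∈ Finset.univ.powerset.filter (fun A' => A ⊆ A' ∧ A' ⊆ L),
        (-1 : ℝ) ^ (A' \ A).card) = ∑ T ∈ (L \ A).powerset, (-1 : ℝ) ^ T.card := by
      apply Finset.sum_bij' (fun A' _ => A' \ A) (fun T _ => A ∪ T)
      · intro A' hA'
        simp only [Finset.mem_filter, Finset.mem_powerset] at hA' ⊢
        exact Finset.sdiff_subset_sdiff hA'.2.2 (le_refl A)
      · intro T hT
        simp only [Finset.mem_powerset] at hT
        simp only [Finset.mem_filter, Finset.mem_powerset]
        refine ⟨Finset.subset_univ _, Finset.subset_union_left, ?_⟩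
        exact Finset.union_subset hAL (hT.trans (Finset.sdiff_subset))
      · intro A' hA'
        simp only [Finset.mem_filter, Finset.mem_powerset] at hA'
        exact Finset.union_sdiff_of_subset hA'.2.1
      · intro T hT
        simp only [Finset.mem_powerset] at hT
        have : Disjoint A T := by
          exact Finset.disjoint_left.mpr fun a ha haT =>
            (Finset.mem_sdiff.mp (hT haT)).2 ha
        rw [Finset.union_sdiff_cancel_left this]
      · intro A' hA'; rfl
    rw [key]
    have hint := Finset.sum_powerset_neg_one_pow_card (x := L \ A)
    have cast : (∑ T ∈ (L \ A).powerset, (-1 : ℝ) ^ T.card)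
        = ((∑ T ∈ (L \ A).powerset, (-1 : ℤ) ^ T.card : ℤ) : ℝ) := by
      push_cast; rfl
    rw [cast, hint]
    by_cases hE : L \ A = ∅
    · have : L = A := le_antisymm (Finset.sdiff_eq_empty_iff_subset.mp hE) hAL
      simp [hE, this]
    · have : L ≠ A := by
        intro hLA; exact hE (by simp [hLA])
      simp [hE, this]
  · have hfil : Finset.univ.powerset.filter (fun A' => A ⊆ A' ∧ A' ⊆ L) = ∅ := by
      apply Finset.filter_eq_empty_iff.mpr
      intro A' _ hA'
      exact hAL (hA'.1.trans hA'.2)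
    have hLA : L ≠ A := fun hLA => hAL (hLA ▸ le_refl L)
    rw [hfil, Finset.sum_empty, if_neg hLA]

lemma bm_eq {ν : RankOrd α → ℝ} {P : Finset α → α → ℝ} (hν : Rationalizes ν P)
    {x : α} {A : Finset α} (hx : x ∈ A) :
    bm P x A = ∑ π : RankOrd α, if lowerSet π x = A then ν π else 0 := by
  unfold bm
  rw [Finset.sum_congr rfl (fun A' hA' => by
    rw [hν.2 A' ⟨x, (Finset.mem_filter.mp hA').2 hx⟩ x ((Finset.mem_filter.mp hA').2 hx)])]
  unfold choiceProb
  rw [Finset.sum_congr rfl (fun A' _ => Finset.mul_sum _ _ _)]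
  rw [Finset.sum_comm]
  apply Finset.sum_congr rfl
  intro π _
  have step1 : ∀ A' : Finset α,
      (-1 : ℝ) ^ (A' \ A).card * (if ∀ y ∈ A', y ≠ x → (π y : ℕ) < (π x : ℕ) then ν π else 0)
      = if A' ⊆ lowerSet π x then (-1 : ℝ) ^ (A' \ A).card * ν π else 0 := by
    intro A'
    rw [if_congr (cond_iff_subset A' x π) rfl rfl, mul_ite, mul_zero]
  rw [Finset.sum_congr rfl (fun A' _ => step1 A')]
  rw [← Finset.sum_filter, Finset.filter_filter, ← Finset.sum_mul, alt_sum A (lowerSet π x),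
    ite_mul, one_mul, zero_mul]

lemma exists_supported {ν : RankOrd α → ℝ} {P : Finset α → α → ℝ} (hν : Rationalizes ν P)
    {x : α} {A : Finset α} (hx : x ∈ A) (hp : 0 < bm P x A) :
    ∃ π : RankOrd α, 0 < ν π ∧ lowerSet π x = A := by
  by_contra hcon
  push_neg at hcon
  have hz : (∑ π : RankOrd α, if lowerSet π x = A then ν π else 0) = 0 := by
    apply Finset.sum_eq_zero
    intro π _
    by_cases hL : lowerSet π x = A
    · rw [if_pos hL]
      have h1 := hν.1.1 π
      have h2 := hcon π
      by_contra hne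
      exact h2 (lt_of_le_of_ne h1 (Ne.symm hne)) hL
    · rw [if_neg hL]
  rw [bm_eq hν hx, hz] at hp
  exact lt_irrefl 0 hp

/-- Splicing two rank orders at cutoff `c`: take the ranking of `π'` below `c`
and the ranking of `π` at and above `c`. -/
def splice (c : ℕ) (π π' : RankOrd α)
    (h : ∀ w, ((π w : ℕ) < c ↔ (π' w : ℕ) < c)) : RankOrd α where
  toFun w := if (π' w : ℕ) < c then π' w else π w
  invFun r := if (r : ℕ) < c then π'.symm r else π.symm r
  left_inv w := by
    by_cases hw : (π' w : ℕ) < c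
    · simp [hw]
    · have hπ : ¬ (π w : ℕ) < c := fun hc => hw ((h w).mp hc)
      simp [hw, hπ]
  right_inv r := by
    by_cases hr : (r : ℕ) < c
    · simp [hr]
    · have h1 : ¬ ((π (π.symm r) : ℕ) < c) := by simpa using hr
      have h2 : ¬ ((π' (π.symm r) : ℕ) < c) := fun hc => h1 ((h _).mpr hc)
      simp [hr, h2]

lemma Sset_splice_le {c : ℕ} {π π' : RankOrd α}
    (h : ∀ w, ((π w : ℕ) < c ↔ (π' w : ℕ) < c)) {t : ℕ} (ht : t ≤ c) :
    Sset (splice c π π' h) t = Sset π' t := by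
  ext w
  simp only [mem_Sset, splice, Equiv.coe_fn_mk]
  by_cases hw : (π' w : ℕ) < c
  · simp [hw]
  · have hπ : ¬ (π w : ℕ) < c := fun hc => hw ((h w).mp hc)
    rw [if_neg hw]
    omega

lemma Sset_splice_ge {c : ℕ} {π π' : RankOrd α}
    (h : ∀ w, ((π w : ℕ) < c ↔ (π' w : ℕ) < c)) {t : ℕ} (ht : c ≤ t) :
    Sset (splice c π π' h) t = Sset π t := by
  ext w
  simp only [mem_Sset, splice, Equiv.coe_fn_mk]
  by_cases hw : (π' w : ℕ) < c
  · have hπ : (π w : ℕ) < c := (h w).mpr hw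
    rw [if_pos hw]
    omega
  · have hπ : ¬ (π w : ℕ) < c := fun hc => hw ((h w).mp hc)
    simp [hw]

lemma I_eq_sum {A : Finset α} {x : α} (hx : x ∈ A) (τ : RankOrd α) :
    (if ∀ y ∈ A, y ≠ x → (τ y : ℕ) < (τ x : ℕ) then (1:ℝ) else 0)
    = ∑ t ∈ Finset.range (Fintype.card α + 1),
        (if A ⊆ Sset τ t ∧ x ∉ Sset τ (t - 1) then (1:ℝ) else 0) := by
  have key : ∀ t, (A ⊆ Sset τ t ∧ x ∉ Sset τ (t - 1)) ↔
      (t = (τ x : ℕ) + 1 ∧ ∀ y ∈ A, y ≠ x → (τ y : ℕ) < (τ x : ℕ)) := by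
    intro t
    constructor
    · rintro ⟨h1, h2⟩
      have hxt : (τ x : ℕ) < t := mem_Sset.mp (h1 hx)
      have hxt2 : ¬ ((τ x : ℕ) < t - 1) := fun hc => h2 (mem_Sset.mpr hc)
      have hteq : t = (τ x : ℕ) + 1 := by omega
      subst hteq
      exact ⟨rfl, (cond_iff_subset A x τ).mpr h1⟩
    · rintro ⟨rfl, h2⟩
      refine ⟨(cond_iff_subset A x τ).mp h2, ?_⟩
      simp only [mem_Sset]
      omega
  by_cases hc : ∀ y ∈ A, y ≠ x → (τ y : ℕ) < (τ x : ℕ)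
  · rw [if_pos hc]
    rw [Finset.sum_congr rfl (fun t _ => by
      rw [if_congr ((key t).trans (and_iff_left hc)) rfl rfl])]
    rw [Finset.sum_ite_eq' (Finset.range (Fintype.card α + 1)) ((τ x : ℕ) + 1)
      (fun _ => (1:ℝ))]
    rw [if_pos (Finset.mem_range.mpr (by have := (τ x).isLt; omega))]
  · rw [if_neg hc]
    rw [eq_comm]
    apply Finset.sum_eq_zero
    intro t _
    rw [if_neg (fun hp => hc ((key t).mp hp).2)]

lemma I_match {c : ℕ} {π π' : RankOrd α}
    (h : ∀ w, ((π w : ℕ) < c ↔ (π' w : ℕ) < c))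
    {A : Finset α} {x : α} (hx : x ∈ A) :
    (if ∀ y ∈ A, y ≠ x → ((splice c π π' h) y : ℕ) < ((splice c π π' h) x : ℕ) then (1:ℝ) else 0)
    + (if ∀ y ∈ A, y ≠ x → ((splice c π' π (fun w => (h w).symm)) y : ℕ)
          < ((splice c π' π (fun w => (h w).symm)) x : ℕ) then (1:ℝ) else 0)
    = (if ∀ y ∈ A, y ≠ x → (π y : ℕ) < (π x : ℕ) then (1:ℝ) else 0)
    + (if ∀ y ∈ A, y ≠ x → (π' y : ℕ) < (π' x : ℕ) then (1:ℝ) else 0) := by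
  rw [I_eq_sum hx (splice c π π' h), I_eq_sum hx (splice c π' π (fun w => (h w).symm)),
    I_eq_sum hx π, I_eq_sum hx π', ← Finset.sum_add_distrib, ← Finset.sum_add_distrib]
  apply Finset.sum_congr rfl
  intro t _
  by_cases ht : t ≤ c
  · rw [Sset_splice_le h ht, Sset_splice_le h (by omega : t - 1 ≤ c),
      Sset_splice_le (fun w => (h w).symm) ht,
      Sset_splice_le (fun w => (h w).symm) (by omega : t - 1 ≤ c)]
    ring
  · rw [Sset_splice_ge h (by omega : c ≤ t), Sset_splice_ge h (by omega : c ≤ t - 1),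
      Sset_splice_ge (fun w => (h w).symm) (by omega : c ≤ t),
      Sset_splice_ge (fun w => (h w).symm) (by omega : c ≤ t - 1)]


lemma exists_branching_pair {ν : RankOrd α → ℝ} {P : Finset α → α → ℝ}
    (h : 4 ≤ Fintype.card α) (hν : Rationalizes ν P)
    (hpos : ∀ A : Finset α, ∀ x ∈ A, 0 < bm P x A) :
    ∃ π π' : RankOrd α, 0 < ν π ∧ 0 < ν π' ∧
      Sset π (Fintype.card α - 2) = Sset π' (Fintype.card α - 2) ∧
      Sset π (Fintype.card α - 1) ≠ Sset π' (Fintype.card α - 1) ∧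
      Sset π (Fintype.card α - 3) ≠ Sset π' (Fintype.card α - 3) := by
  obtain ⟨x1, x2, hx12⟩ := Fintype.exists_pair_of_one_lt_card
    (by omega : 1 < Fintype.card α)
  set B : Finset α := Finset.univ \ {x1, x2} with hB
  have hx1B : x1 ∉ B := by simp [hB]
  have hx2B : x2 ∉ B := by simp [hB]
  have hBcard : B.card = Fintype.card α - 2 := by
    rw [hB, Finset.card_sdiff_of_subset (Finset.subset_univ _), Finset.card_univ,
      Finset.card_pair hx12]
  obtain ⟨y1, hy1, y2, hy2, hy12⟩ := Finset.one_lt_card.mp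
    (by omega : 1 < B.card)
  -- the four supported orders
  have hA1 : x1 ∈ insert x1 B := Finset.mem_insert_self _ _
  have hA2 : x2 ∈ insert x2 B := Finset.mem_insert_self _ _
  have cardA1 : (insert x1 B).card = Fintype.card α - 1 := by
    rw [Finset.card_insert_of_notMem hx1B, hBcard]; omega
  have cardA2 : (insert x2 B).card = Fintype.card α - 1 := by
    rw [Finset.card_insert_of_notMem hx2B, hBcard]; omega
  obtain ⟨πa, hνa, hLa⟩ := exists_supported hν hA1 (hpos _ x1 hA1)
  obtain ⟨πb, hνb, hLb⟩ := exists_supported hν hA2 (hpos _ x2 hA2)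
  obtain ⟨πc, hνc, hLc⟩ := exists_supported hν hy1 (hpos _ y1 hy1)
  obtain ⟨πd, hνd, hLd⟩ := exists_supported hν hy2 (hpos _ y2 hy2)
  have hSa := Sset_of_lower hLa
  have hSb := Sset_of_lower hLb
  have hSc := Sset_of_lower hLc
  have hSd := Sset_of_lower hLd
  have hSa1 : Sset πa (Fintype.card α - 1) = insert x1 B := by
    rw [← cardA1]; exact hSa.1
  have hSb1 : Sset πb (Fintype.card α - 1) = insert x2 B := by
    rw [← cardA2]; exact hSb.1
  have insert_sdiff : ∀ (z : α), z ∉ B → insert z B \ {z} = B := by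
    intro z hz
    rw [Finset.sdiff_singleton_eq_erase, Finset.erase_insert hz]
  have hSa2 : Sset πa (Fintype.card α - 2) = B := by
    have h2 := hSa.2
    rw [cardA1, insert_sdiff x1 hx1B] at h2
    rw [(by omega : Fintype.card α - 2 = Fintype.card α - 1 - 1)]
    exact h2
  have hSb2 : Sset πb (Fintype.card α - 2) = B := by
    have h2 := hSb.2
    rw [cardA2, insert_sdiff x2 hx2B] at h2
    rw [(by omega : Fintype.card α - 2 = Fintype.card α - 1 - 1)]
    exact h2
  have hSc2 : Sset πc (Fintype.card α - 2) = B := by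
    rw [← hBcard]; exact hSc.1
  have hSd2 : Sset πd (Fintype.card α - 2) = B := by
    rw [← hBcard]; exact hSd.1
  have hSc3 : Sset πc (Fintype.card α - 3) = B \ {y1} := by
    have h2 := hSc.2
    rw [hBcard] at h2
    rw [(by omega : Fintype.card α - 3 = Fintype.card α - 2 - 1)]
    exact h2
  have hSd3 : Sset πd (Fintype.card α - 3) = B \ {y2} := by
    have h2 := hSd.2
    rw [hBcard] at h2
    rw [(by omega : Fintype.card α - 3 = Fintype.card α - 2 - 1)]
    exact h2
  have hne1 : insert x1 B ≠ insert x2 B := by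
    intro he
    have hmem : x1 ∈ insert x2 B := he ▸ Finset.mem_insert_self x1 B
    rcases Finset.mem_insert.mp hmem with h' | h'
    · exact hx12 h'
    · exact hx1B h'
  have hne3 : B \ {y1} ≠ B \ {y2} := by
    intro he
    have hmem : y2 ∈ B \ {y1} :=
      Finset.mem_sdiff.mpr ⟨hy2, by simp [Ne.symm hy12]⟩
    rw [he] at hmem
    simp at hmem
  by_cases hab : Sset πa (Fintype.card α - 3) = Sset πb (Fintype.card α - 3)
  · have pick : ∀ e : RankOrd α, 0 < ν e → Sset e (Fintype.card α - 2) = B →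
        Sset e (Fintype.card α - 3) ≠ Sset πa (Fintype.card α - 3) →
        ∃ π π' : RankOrd α, 0 < ν π ∧ 0 < ν π' ∧
          Sset π (Fintype.card α - 2) = Sset π' (Fintype.card α - 2) ∧
          Sset π (Fintype.card α - 1) ≠ Sset π' (Fintype.card α - 1) ∧
          Sset π (Fintype.card α - 3) ≠ Sset π' (Fintype.card α - 3) := by
      intro e hνe hSe2 he3
      by_cases he1 : Sset e (Fintype.card α - 1) = Sset πa (Fintype.card α - 1)
      · refine ⟨e, πb, hνe, hνb, by rw [hSe2, hSb2], ?_, ?_⟩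
        · rw [he1, hSa1, hSb1]; exact hne1
        · rw [← hab]; exact he3
      · exact ⟨e, πa, hνe, hνa, by rw [hSe2, hSa2], he1, he3⟩
    by_cases hca : Sset πc (Fintype.card α - 3) = Sset πa (Fintype.card α - 3)
    · apply pick πd hνd hSd2
      rw [← hca]
      rw [hSc3, hSd3]
      exact fun he => hne3 he.symm
    · exact pick πc hνc hSc2 hca
  · refine ⟨πa, πb, hνa, hνb, by rw [hSa2, hSb2], ?_, hab⟩
    rw [hSa1, hSb1]; exact hne1


end Auxiliary

/-- If every Block–Marschak polynomial of a rationalizable system of choice probabilities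
on a set with at least four elements is strictly positive, then the rationalizing
distribution is not unique. -/
theorem not_unique_of_bm_pos {α : Type*} [Fintype α] [DecidableEq α]
    (h : 4 ≤ Fintype.card α) (P : Finset α → α → ℝ)
    (ν : RankOrd α → ℝ) (hν : Rationalizes ν P)
    (hpos : ∀ A : Finset α, ∀ x ∈ A, 0 < bm P x A) :
    ∃ ν' : RankOrd α → ℝ, ν' ≠ ν ∧ Rationalizes ν' P := by
  obtain ⟨π, π', hνπ, hνπ', hS2, hS1, hS3⟩ := exists_branching_pair h hν hpos
  have hiff : ∀ w, ((π w : ℕ) < Fintype.card α - 2 ↔ (π' w : ℕ) < Fintype.card α - 2) := by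
    intro w
    rw [← mem_Sset, ← mem_Sset, hS2]
  set σ : RankOrd α := splice (Fintype.card α - 2) π π' hiff with hσdef
  set σ' : RankOrd α := splice (Fintype.card α - 2) π' π (fun w => (hiff w).symm) with hσ'def
  have hσ1 : Sset σ (Fintype.card α - 1) = Sset π (Fintype.card α - 1) :=
    Sset_splice_ge hiff (by omega)
  have hσ3 : Sset σ (Fintype.card α - 3) = Sset π' (Fintype.card α - 3) :=
    Sset_splice_le hiff (by omega)
  have hσ'1 : Sset σ' (Fintype.card α - 1) = Sset π' (Fintype.card α - 1) :=
    Sset_splice_ge (fun w => (hiff w).symm) (by omega)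
  have hσ'3 : Sset σ' (Fintype.card α - 3) = Sset π (Fintype.card α - 3) :=
    Sset_splice_le (fun w => (hiff w).symm) (by omega)
  have hσπ : σ ≠ π := fun he => hS3 (he ▸ hσ3)
  have hσπ' : σ ≠ π' := fun he => hS1 ((he ▸ hσ1).symm)
  have hσ'π : σ' ≠ π := fun he => hS1 (he ▸ hσ'1)
  have hσ'π' : σ' ≠ π' := fun he => hS3 ((he ▸ hσ'3).symm)
  have hσσ' : σ ≠ σ' := fun he => hS1 (by rw [← hσ1, he, hσ'1])
  have hππ' : π ≠ π' := fun he => hS1 (by rw [he])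
  set ε : ℝ := min (ν π) (ν π') with hεdef
  have hε : 0 < ε := lt_min hνπ hνπ'
  set ν' : RankOrd α → ℝ := fun τ => ν τ + ε *
      ((if τ = σ then 1 else 0) + (if τ = σ' then 1 else 0)
        - (if τ = π then 1 else 0) - (if τ = π' then 1 else 0)) with hν'def
  have hν'app : ∀ τ, ν' τ = ν τ + ε *
      ((if τ = σ then 1 else 0) + (if τ = σ' then 1 else 0)
        - (if τ = π then 1 else 0) - (if τ = π' then 1 else 0)) := fun τ => rfl
  refine ⟨ν', ?_, ⟨⟨?_, ?_⟩, ?_⟩⟩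
  · -- ν' ≠ ν
    intro he
    have h1 := congrFun he σ
    rw [hν'app σ, if_pos rfl, if_neg hσσ', if_neg hσπ, if_neg hσπ'] at h1
    have hε0 : ε = 0 := by linarith
    exact absurd hε0 (ne_of_gt hε)
  · -- nonnegativity
    intro τ
    rw [hν'app τ]
    by_cases h1 : τ = π
    · have n1 : τ ≠ σ := fun he => hσπ (he.symm.trans h1)
      have n2 : τ ≠ σ' := fun he => hσ'π (he.symm.trans h1)
      have n3 : τ ≠ π' := fun he => hππ' (h1.symm.trans he)
      rw [if_neg n1, if_neg n2, if_pos h1, if_neg n3]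
      have hle : ε ≤ ν π := min_le_left _ _
      have h1' : ν τ = ν π := by rw [h1]
      linarith
    · by_cases h2 : τ = π'
      · have n1 : τ ≠ σ := fun he => hσπ' (he.symm.trans h2)
        have n2 : τ ≠ σ' := fun he => hσ'π' (he.symm.trans h2)
        rw [if_neg n1, if_neg n2, if_neg h1, if_pos h2]
        have hle : ε ≤ ν π' := min_le_right _ _
        have h2' : ν τ = ν π' := by rw [h2]
        linarith
      · rw [if_neg h1, if_neg h2]
        have h0 := hν.1.1 τ
        split_ifs <;> linarith
  · -- total mass one
    have hsum : ∀ ρ : RankOrd α, ∑ τ : RankOrd α, (if τ = ρ then (1:ℝ) else 0) = 1 := by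
      intro ρ
      rw [Finset.sum_ite_eq' Finset.univ ρ (fun _ => (1:ℝ)), if_pos (Finset.mem_univ ρ)]
    rw [Finset.sum_congr rfl (fun τ _ => hν'app τ), Finset.sum_add_distrib, hν.1.2,
      ← Finset.mul_sum]
    have hz : ∑ τ : RankOrd α,
        ((if τ = σ then (1:ℝ) else 0) + (if τ = σ' then 1 else 0)
          - (if τ = π then 1 else 0) - (if τ = π' then 1 else 0)) = 0 := by
      rw [Finset.sum_sub_distrib, Finset.sum_sub_distrib, Finset.sum_add_distrib,
        hsum σ, hsum σ', hsum π, hsum π']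
      norm_num
    rw [hz, mul_zero, add_zero]
  · -- ν' rationalizes P
    intro A hA x hx
    rw [hν.2 A hA x hx]
    have hI := I_match hiff hx
    rw [← hσdef, ← hσ'def] at hI
    unfold choiceProb
    have expand : ∀ τ : RankOrd α,
        (if ∀ y ∈ A, y ≠ x → (τ y : ℕ) < (τ x : ℕ) then ν' τ else 0) =
        (if ∀ y ∈ A, y ≠ x → (τ y : ℕ) < (τ x : ℕ) then ν τ else 0)
        + ε * (if τ = σ then (if ∀ y ∈ A, y ≠ x → (σ y : ℕ) < (σ x : ℕ) then (1:ℝ) else 0) else 0)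
        + ε * (if τ = σ' then (if ∀ y ∈ A, y ≠ x → (σ' y : ℕ) < (σ' x : ℕ) then (1:ℝ) else 0) else 0)
        - ε * (if τ = π then (if ∀ y ∈ A, y ≠ x → (π y : ℕ) < (π x : ℕ) then (1:ℝ) else 0) else 0)
        - ε * (if τ = π' then (if ∀ y ∈ A, y ≠ x → (π' y : ℕ) < (π' x : ℕ) then (1:ℝ) else 0) else 0) := by
      intro τ
      have e : ∀ ρ : RankOrd α,
          (if τ = ρ then (if ∀ y ∈ A, y ≠ x → (ρ y : ℕ) < (ρ x : ℕ) then (1:ℝ) else 0) else 0)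
          = (if ∀ y ∈ A, y ≠ x → (τ y : ℕ) < (τ x : ℕ) then (1:ℝ) else 0)
            * (if τ = ρ then (1:ℝ) else 0) := by
        intro ρ
        by_cases hρ : τ = ρ
        · subst hρ; rw [if_pos rfl, if_pos rfl, mul_one]
        · rw [if_neg hρ, if_neg hρ, mul_zero]
      rw [e σ, e σ', e π, e π', hν'app τ]
      by_cases hc : ∀ y ∈ A, y ≠ x → (τ y : ℕ) < (τ x : ℕ)
      · simp only [if_pos hc]
        ring
      · simp only [if_neg hc]
        ring
    rw [Finset.sum_congr rfl (fun τ _ => expand τ)]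
    rw [Finset.sum_sub_distrib, Finset.sum_sub_distrib, Finset.sum_add_distrib,
      Finset.sum_add_distrib, ← Finset.mul_sum, ← Finset.mul_sum, ← Finset.mul_sum,
      ← Finset.mul_sum]
    have single : ∀ ρ : RankOrd α,
        ∑ τ : RankOrd α, (if τ = ρ then
            (if ∀ y ∈ A, y ≠ x → (ρ y : ℕ) < (ρ x : ℕ) then (1:ℝ) else 0) else 0)
        = (if ∀ y ∈ A, y ≠ x → (ρ y : ℕ) < (ρ x : ℕ) then (1:ℝ) else 0) := by
      intro ρ
      rw [Finset.sum_ite_eq' Finset.univ ρ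
        (fun _ => if ∀ y ∈ A, y ≠ x → (ρ y : ℕ) < (ρ x : ℕ) then (1:ℝ) else 0),
        if_pos (Finset.mem_univ ρ)]
    rw [single σ, single σ', single π, single π']
    have h2 : ε * ((if ∀ y ∈ A, y ≠ x → (σ y : ℕ) < (σ x : ℕ) then (1:ℝ) else 0)
          + (if ∀ y ∈ A, y ≠ x → (σ' y : ℕ) < (σ' x : ℕ) then (1:ℝ) else 0))
        = ε * ((if ∀ y ∈ A, y ≠ x → (π y : ℕ) < (π x : ℕ) then (1:ℝ) else 0)
          + (if ∀ y ∈ A, y ≠ x → (π' y : ℕ) < (π' x : ℕ) then (1:ℝ) else 0)) := by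
      rw [hI]
    linarith
end

section
/- Uniqueness of a random utility representation is a property of its support: if ν is the unique distribution rationalizing its induced system of choice probabilities, and ν' is any distribution over linear orders with the same support as ν, then ν' is the unique distribution rationalizing its own induced system of choice probabilities. -/
open Finset
open scoped Classical

variable {α : Type*} [Fintype α] [DecidableEq α]

/-! If `ν''` and `ν'` rationalize the same choice probabilities, their difference `d` has total
mass zero, induces zero choice probabilities, and is negative only on the support of `ν'`,
which is the support of `ν`. Hence `ν + ε • d` is, for small `ε > 0`, again a distribution
rationalizing `P^ν`, and uniqueness for `ν` forces `d = 0`. -/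

open Filter Topology

def IsUniqueRationalization (ν : RankOrd α → ℝ) : Prop :=
  ∀ ν'' : RankOrd α → ℝ, IsDist ν'' →
    (∀ A : Finset α, ∀ x ∈ A, choiceProb ν'' A x = choiceProb ν A x) → ν'' = ν

theorem choiceProb_add (ν μ : RankOrd α → ℝ) (A : Finset α) (x : α) :
    choiceProb (ν + μ) A x = choiceProb ν A x + choiceProb μ A x := by
  simp only [choiceProb, ← Finset.sum_add_distrib, Pi.add_apply, ite_add_ite, add_zero]

theorem choiceProb_smul (c : ℝ) (ν : RankOrd α → ℝ) (A : Finset α) (x : α) :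
    choiceProb (c • ν) A x = c * choiceProb ν A x := by
  simp only [choiceProb, Finset.mul_sum, Pi.smul_apply, smul_eq_mul, mul_ite, mul_zero]

theorem choiceProb_sub (ν μ : RankOrd α → ℝ) (A : Finset α) (x : α) :
    choiceProb (ν - μ) A x = choiceProb ν A x - choiceProb μ A x := by
  simp only [choiceProb, ← Finset.sum_sub_distrib, Pi.sub_apply, ite_sub_ite, sub_zero]

theorem exists_pos_nonneg_add_smul {ι : Type*} [Finite ι] {ν d : ι → ℝ} (hν : 0 ≤ ν)
    (hd : ∀ i, d i < 0 → 0 < ν i) : ∃ ε : ℝ, 0 < ε ∧ 0 ≤ ν + ε • d := by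
  have h : ∀ i, ∀ᶠ ε in 𝓝[>] (0 : ℝ), 0 ≤ ν i + ε * d i := by
    intro i
    rcases lt_or_ge (d i) 0 with hneg | hnonneg
    · have hlim : Tendsto (fun ε => ν i + ε * d i) (𝓝[>] 0) (𝓝 (ν i)) :=
        (Continuous.tendsto' (by fun_prop) 0 (ν i) (by simp)).mono_left nhdsWithin_le_nhds
      exact (hlim.eventually (lt_mem_nhds (hd i hneg))).mono fun _ h => h.le
    · filter_upwards [self_mem_nhdsWithin] with ε (hε : 0 < ε)
      exact add_nonneg (hν i) (mul_nonneg hε.le hnonneg)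
  obtain ⟨ε, hε, hpos⟩ := ((eventually_all.2 h).and self_mem_nhdsWithin).exists
  exact ⟨ε, hpos, fun i => hε i⟩

theorem IsUniqueRationalization.eq_zero_of_choiceProb_eq_zero {ν d : RankOrd α → ℝ}
    (huniq : IsUniqueRationalization ν) (hν : IsDist ν) (hsum : ∑ π, d π = 0)
    (hchoice : ∀ A : Finset α, ∀ x ∈ A, choiceProb d A x = 0)
    (hsupp : ∀ π, d π < 0 → 0 < ν π) : d = 0 := by
  obtain ⟨ε, hε, hnonneg⟩ := exists_pos_nonneg_add_smul hν.1 hsupp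
  have hdist : IsDist (ν + ε • d) := by
    refine ⟨hnonneg, ?_⟩
    simp only [Pi.add_apply, Pi.smul_apply, smul_eq_mul, Finset.sum_add_distrib,
      ← Finset.mul_sum, hsum, hν.2, mul_zero, add_zero]
  have heq : ν + ε • d = ν := huniq _ hdist fun A x hx => by
    rw [choiceProb_add, choiceProb_smul, hchoice A x hx, mul_zero, add_zero]
  simpa [hε.ne'] using heq

/-- Uniqueness is a property of the support: if `ν` is the unique rationalization of its
induced choice probabilities, so is any distribution `ν'` with the same support. -/
theorem unique_of_same_support {α : Type*} [Fintype α] [DecidableEq α]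
    (ν : RankOrd α → ℝ) (hν : IsDist ν)
    (huniq : ∀ ν'' : RankOrd α → ℝ, IsDist ν'' →
      (∀ A : Finset α, ∀ x ∈ A, choiceProb ν'' A x = choiceProb ν A x) → ν'' = ν)
    (ν' : RankOrd α → ℝ) (hν' : IsDist ν')
    (hsupp : ∀ π : RankOrd α, 0 < ν π ↔ 0 < ν' π) :
    ∀ ν'' : RankOrd α → ℝ, IsDist ν'' →
      (∀ A : Finset α, ∀ x ∈ A, choiceProb ν'' A x = choiceProb ν' A x) → ν'' = ν' := by
  intro ν'' hν'' hchoice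
  have hzero : ν'' - ν' = 0 := by
    refine IsUniqueRationalization.eq_zero_of_choiceProb_eq_zero huniq hν ?_ ?_ ?_
    · simp only [Pi.sub_apply, Finset.sum_sub_distrib, hν''.2, hν'.2, sub_self]
    · intro A x hx
      rw [choiceProb_sub, hchoice A x hx, sub_self]
    · intro π hπ
      exact (hsupp π).2 (by linarith [hν''.1 π, show ν'' π - ν' π < 0 from hπ])
  exact sub_eq_zero.1 hzero
end

section
/- (Reduction to four-element subsets) Let (X,P) be a rationalizable system of choice probabilities that is not uniquely rationalized. Then there exists a four-element subset Y ⊆ X such that the restricted system of choice probabilities (Y, P|_Y), given by the marginal choice probabilities on nonempty subsets of Y, is rationalizable but not uniquely rationalized. -/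
open Finset
open scoped Classical

variable {α : Type*} [Fintype α] [DecidableEq α]

section Basics
variable {α : Type*} [Fintype α] [DecidableEq α]

lemma card_filter_lt (π : RankOrd α) (c : ℕ) (hc : c ≤ Fintype.card α) :
    (Finset.univ.filter (fun w => (π w : ℕ) < c)).card = c := by
  have h : (Finset.univ.filter (fun w => (π w : ℕ) < c)).card = (Finset.range c).card := by
    apply Finset.card_bij' (i := fun w _ => (π w : ℕ))
      (j := fun t ht => π.symm ⟨t, lt_of_lt_of_le (Finset.mem_range.mp ht) hc⟩)
      <;> intro a ha <;> simp at ha ⊢ <;> omega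
  simpa using h

lemma mem_pathOf {π : RankOrd α} {m : ℕ} {w : α} :
    w ∈ pathOf π m ↔ (π w : ℕ) < Fintype.card α - m := by
  simp [pathOf]

lemma pathOf_card (π : RankOrd α) (m : ℕ) :
    (pathOf π m).card = Fintype.card α - m :=
  card_filter_lt π _ (Nat.sub_le _ _)

lemma pathOf_zero (π : RankOrd α) : pathOf π 0 = Finset.univ := by
  ext w; simp [pathOf, (π w).is_lt]

lemma pathOf_of_le {π : RankOrd α} {m : ℕ} (h : Fintype.card α ≤ m) :
    pathOf π m = ∅ := by
  ext w; simp [pathOf, Nat.sub_eq_zero_of_le h]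

lemma pathOf_inj {π π' : RankOrd α} (h : ∀ m, pathOf π m = pathOf π' m) : π = π' := by
  have key : ∀ w, (π w : ℕ) = (π' w : ℕ) := by
    intro w
    by_contra hne
    rcases Nat.lt_or_ge (π w : ℕ) (π' w : ℕ) with hlt | hge
    · have h1 : w ∈ pathOf π (Fintype.card α - ((π w : ℕ) + 1)) := by
        rw [mem_pathOf]
        have := (π w).is_lt
        omega
      rw [h] at h1
      rw [mem_pathOf] at h1
      have := (π' w).is_lt
      omega
    · have hlt : (π' w : ℕ) < (π w : ℕ) := by omega
      have h1 : w ∈ pathOf π' (Fintype.card α - ((π' w : ℕ) + 1)) := by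
        rw [mem_pathOf]
        have := (π' w).is_lt
        omega
      rw [← h] at h1
      rw [mem_pathOf] at h1
      have := (π w).is_lt
      omega
  apply Equiv.ext
  intro w
  exact Fin.ext (key w)

/-- `pathOf π m = insert a (pathOf π (m+1))` where `a` is the element of rank `n - m - 1`. -/
lemma pathOf_insert (π : RankOrd α) {m : ℕ} (hm : m < Fintype.card α) :
    pathOf π m = insert (π.symm ⟨Fintype.card α - m - 1, by omega⟩) (pathOf π (m + 1)) := by
  ext w
  simp only [mem_pathOf, Finset.mem_insert]
  constructor
  · intro hw
    rcases Nat.lt_or_ge (π w : ℕ) (Fintype.card α - (m+1)) with h1 | h1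
    · right; exact h1
    · left
      have : (π w : ℕ) = Fintype.card α - m - 1 := by omega
      have : π w = ⟨Fintype.card α - m - 1, by omega⟩ := Fin.ext this
      rw [← this]; simp
  · intro hw
    rcases hw with rfl | hw
    · simp; omega
    · omega

end Basics
section Kernel
variable {α : Type*} [Fintype α] [DecidableEq α]

/-- The weak lower contour set of `x` under `π`. -/
def Lset (π : RankOrd α) (x : α) : Finset α :=
  Finset.univ.filter (fun w => (π w : ℕ) ≤ (π x : ℕ))

lemma mem_Lset {π : RankOrd α} {x w : α} : w ∈ Lset π x ↔ (π w : ℕ) ≤ (π x : ℕ) := by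
  simp [Lset]

lemma card_Lset (π : RankOrd α) (x : α) : (Lset π x).card = (π x : ℕ) + 1 := by
  have h : Lset π x = Finset.univ.filter (fun w => (π w : ℕ) < (π x : ℕ) + 1) := by
    ext w; simp [Lset, Nat.lt_succ_iff]
  rw [h, card_filter_lt π _ (π x).is_lt]

lemma max_iff_subset_Lset {π : RankOrd α} {x : α} {A : Finset α} :
    (∀ y ∈ A, y ≠ x → (π y : ℕ) < (π x : ℕ)) ↔ A ⊆ Lset π x := by
  constructor
  · intro h y hy
    rw [mem_Lset]
    by_cases hyx : y = x
    · subst hyx; exact le_refl _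
    · exact le_of_lt (h y hy hyx)
  · intro h y hy hyx
    have hle := mem_Lset.mp (h hy)
    rcases lt_or_eq_of_le hle with h1 | h1
    · exact h1
    · exact absurd (π.injective (Fin.ext h1)) hyx

/-- Kernel lemma: a difference of rationalizing distributions sums to zero over each
set `{π : Lset π x = A}`. -/
lemma kernel_Lset {P : Finset α → α → ℝ} {ν₁ ν₂ : RankOrd α → ℝ}
    (h₁ : Rationalizes ν₁ P) (h₂ : Rationalizes ν₂ P)
    (x : α) (A : Finset α) (hxA : x ∈ A) :
    ∑ π : RankOrd α, (if Lset π x = A then ν₁ π - ν₂ π else 0) = 0 := by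
  have h0 : ∀ A' : Finset α, x ∈ A' →
      ∑ π : RankOrd α, (if ∀ y ∈ A', y ≠ x → (π y : ℕ) < (π x : ℕ) then ν₁ π - ν₂ π else 0)
        = 0 := by
    intro A' hx'
    have hne : A'.Nonempty := ⟨x, hx'⟩
    have e1 : P A' x = choiceProb ν₁ A' x := h₁.2 A' hne x hx'
    have e2 : P A' x = choiceProb ν₂ A' x := h₂.2 A' hne x hx'
    have e3 : ∑ π : RankOrd α,
        (if ∀ y ∈ A', y ≠ x → (π y : ℕ) < (π x : ℕ) then ν₁ π - ν₂ π else 0)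
        = choiceProb ν₁ A' x - choiceProb ν₂ A' x := by
      rw [choiceProb, choiceProb, ← Finset.sum_sub_distrib]
      apply Finset.sum_congr rfl
      intro π _
      split_ifs <;> ring
    rw [e3, ← e1, ← e2]; ring
  have key : ∀ π : RankOrd α,
      ∑ A' ∈ Finset.univ.powerset.filter (fun A' => A ⊆ A'),
        (-1 : ℝ) ^ (A' \ A).card *
          (if ∀ y ∈ A', y ≠ x → (π y : ℕ) < (π x : ℕ) then ν₁ π - ν₂ π else 0)
      = (if Lset π x = A then ν₁ π - ν₂ π else 0) := by
    intro π
    set L := Lset π x with hL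
    set δ : ℝ := ν₁ π - ν₂ π with hδ
    have hmax : ∀ A' : Finset α,
        (-1 : ℝ) ^ (A' \ A).card *
          (if ∀ y ∈ A', y ≠ x → (π y : ℕ) < (π x : ℕ) then δ else 0)
        = (if A' ⊆ L then (-1 : ℝ) ^ (A' \ A).card * δ else 0) := by
      intro A'
      by_cases hc : A' ⊆ L
      · rw [if_pos hc, if_pos (max_iff_subset_Lset.mpr hc)]
      · rw [if_neg hc, if_neg (fun h => hc (max_iff_subset_Lset.mp h)), mul_zero]
    calc ∑ A' ∈ Finset.univ.powerset.filter (fun A' => A ⊆ A'),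
          (-1 : ℝ) ^ (A' \ A).card *
            (if ∀ y ∈ A', y ≠ x → (π y : ℕ) < (π x : ℕ) then δ else 0)
        = ∑ A' ∈ (Finset.univ.powerset.filter (fun A' => A ⊆ A')).filter (fun A' => A' ⊆ L),
            (-1 : ℝ) ^ (A' \ A).card * δ := by
          conv_rhs => rw [Finset.sum_filter]
          exact Finset.sum_congr rfl (fun A' _ => hmax A')
      _ = (if L = A then δ else 0) := by
          by_cases hAL : A ⊆ L
          · have hset : (Finset.univ.powerset.filter (fun A' => A ⊆ A')).filter
                (fun A' => A' ⊆ L) = L.powerset.filter (fun A' => A ⊆ A') := by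
              ext A'
              simp only [Finset.mem_filter, Finset.mem_powerset]
              constructor
              · rintro ⟨⟨-, h2⟩, h3⟩; exact ⟨h3, h2⟩
              · rintro ⟨h1, h2⟩; exact ⟨⟨Finset.subset_univ _, h2⟩, h1⟩
            rw [hset]
            have hbij : ∑ A' ∈ L.powerset.filter (fun A' => A ⊆ A'),
                (-1 : ℝ) ^ (A' \ A).card * δ
                = ∑ S ∈ (L \ A).powerset, (-1 : ℝ) ^ S.card * δ := by
              refine Finset.sum_bij' (fun A' _ => A' \ A) (fun S _ => A ∪ S) ?_ ?_ ?_ ?_ ?_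
              · intro A' hA'
                simp only [Finset.mem_filter, Finset.mem_powerset] at hA' ⊢
                exact Finset.sdiff_subset_sdiff hA'.1 (le_refl _)
              · intro S hS
                simp only [Finset.mem_powerset] at hS
                simp only [Finset.mem_filter, Finset.mem_powerset]
                exact ⟨Finset.union_subset hAL (hS.trans Finset.sdiff_subset),
                  Finset.subset_union_left⟩
              · intro A' hA'
                simp only [Finset.mem_filter, Finset.mem_powerset] at hA'
                exact Finset.union_sdiff_of_subset hA'.2
              · intro S hS
                simp only [Finset.mem_powerset] at hS
                exact Finset.union_sdiff_cancel_left (Finset.disjoint_sdiff.mono_right hS)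
              · intro A' hA'
                rfl
            have hpow : (∑ S ∈ (L \ A).powerset, (-1 : ℝ) ^ S.card)
                = if L \ A = ∅ then 1 else 0 := by
              have h := Finset.sum_powerset_neg_one_pow_card (x := L \ A)
              have hc : ((∑ m ∈ (L \ A).powerset, (-1 : ℤ) ^ m.card : ℤ) : ℝ)
                  = ∑ S ∈ (L \ A).powerset, (-1 : ℝ) ^ S.card := by push_cast; rfl
              rw [← hc, h]
              split_ifs <;> simp
            rw [hbij, ← Finset.sum_mul, hpow]
            by_cases hLA : L = A
            · have he : L \ A = ∅ := by rw [hLA]; exact Finset.sdiff_self A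
              rw [if_pos he, if_pos hLA, one_mul]
            · have he : L \ A ≠ ∅ := by
                intro h
                exact hLA (Finset.Subset.antisymm
                  (Finset.sdiff_eq_empty_iff_subset.mp h) hAL)
              rw [if_neg he, if_neg hLA, zero_mul]
          · have hempty : (Finset.univ.powerset.filter (fun A' => A ⊆ A')).filter
                (fun A' => A' ⊆ L) = ∅ := by
              apply Finset.filter_false_of_mem
              intro A' hA'
              simp only [Finset.mem_filter, Finset.mem_powerset] at hA'
              intro hsub
              exact hAL (hA'.2.trans hsub)
            rw [hempty, Finset.sum_empty, if_neg (fun h => hAL (le_of_eq h.symm))]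
  have swap : ∑ π : RankOrd α, (if Lset π x = A then ν₁ π - ν₂ π else 0)
      = ∑ A' ∈ Finset.univ.powerset.filter (fun A' => A ⊆ A'),
          (-1 : ℝ) ^ (A' \ A).card *
            (∑ π : RankOrd α,
              (if ∀ y ∈ A', y ≠ x → (π y : ℕ) < (π x : ℕ) then ν₁ π - ν₂ π else 0)) := by
    simp only [Finset.mul_sum]
    rw [Finset.sum_comm]
    exact Finset.sum_congr rfl (fun π _ => (key π).symm)
  rw [swap]
  apply Finset.sum_eq_zero
  intro A' hA'
  simp only [Finset.mem_filter, Finset.mem_powerset] at hA'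
  rw [h0 A' (hA'.2 hxA), mul_zero]

end Kernel
section EdgeSum
variable {α : Type*} [Fintype α] [DecidableEq α]

lemma Lset_eq_pathOf {π : RankOrd α} {m : ℕ} (hm : m + 1 ≤ Fintype.card α) {x : α}
    (hx : (π x : ℕ) = Fintype.card α - m - 1) :
    Lset π x = pathOf π m := by
  ext w
  rw [mem_Lset, mem_pathOf, hx]
  omega

/-- The edge-flow version of the kernel lemma: for any `π₀` and any level `m`, the
difference of two rationalizing distributions has zero total mass on the set of orders
whose path agrees with that of `π₀` at levels `m` and `m+1`. -/
lemma kernel_edge {P : Finset α → α → ℝ} {ν₁ ν₂ : RankOrd α → ℝ}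
    (h₁ : Rationalizes ν₁ P) (h₂ : Rationalizes ν₂ P)
    (π₀ : RankOrd α) {m : ℕ} (hm : m + 1 ≤ Fintype.card α) :
    ∑ π : RankOrd α,
      (if pathOf π m = pathOf π₀ m ∧ pathOf π (m+1) = pathOf π₀ (m+1)
        then ν₁ π - ν₂ π else 0) = 0 := by
  set n := Fintype.card α with hn
  set x : α := π₀.symm ⟨n - m - 1, by omega⟩ with hxdef
  have hx0 : (π₀ x : ℕ) = n - m - 1 := by rw [hxdef]; simp
  have hA : Lset π₀ x = pathOf π₀ m := Lset_eq_pathOf hm hx0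
  have hxA : x ∈ pathOf π₀ m := by rw [mem_pathOf, hx0]; omega
  have hiff : ∀ π : RankOrd α,
      (pathOf π m = pathOf π₀ m ∧ pathOf π (m+1) = pathOf π₀ (m+1)) ↔
        Lset π x = pathOf π₀ m := by
    intro π
    constructor
    · rintro ⟨hm1, hm2⟩
      have hx1 : x ∈ pathOf π m := hm1 ▸ hxA
      have hx2 : x ∉ pathOf π (m+1) := by
        rw [hm2, mem_pathOf, hx0]; omega
      rw [mem_pathOf] at hx1 hx2
      have hrank : (π x : ℕ) = n - m - 1 := by omega
      rw [Lset_eq_pathOf hm hrank, hm1]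
    · intro hL
      have hcard : (π x : ℕ) + 1 = n - m := by
        have c1 := card_Lset π x
        rw [hL] at c1
        rw [pathOf_card] at c1
        omega
      have hrank : (π x : ℕ) = n - m - 1 := by omega
      have e1 : pathOf π m = pathOf π₀ m := by
        rw [← Lset_eq_pathOf hm hrank, hL]
      refine ⟨e1, ?_⟩
      have e2 : pathOf π (m+1) = (pathOf π m).erase x := by
        ext w
        rw [mem_pathOf, Finset.mem_erase, mem_pathOf]
        constructor
        · intro hw
          refine ⟨?_, by omega⟩
          intro hwx
          subst hwx
          omega
        · rintro ⟨hwx, hw⟩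
          have : (π w : ℕ) ≠ (π x : ℕ) := fun h => hwx (π.injective (Fin.ext h))
          omega
      have e2' : pathOf π₀ (m+1) = (pathOf π₀ m).erase x := by
        ext w
        rw [mem_pathOf, Finset.mem_erase, mem_pathOf]
        constructor
        · intro hw
          refine ⟨?_, by omega⟩
          intro hwx
          subst hwx
          omega
        · rintro ⟨hwx, hw⟩
          have : (π₀ w : ℕ) ≠ (π₀ x : ℕ) := fun h => hwx (π₀.injective (Fin.ext h))
          omega
      rw [e2, e2', e1]
  refine Eq.trans ?_ (kernel_Lset h₁ h₂ x (pathOf π₀ m) hxA)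
  apply Finset.sum_congr rfl
  intro π _
  by_cases hc : pathOf π m = pathOf π₀ m ∧ pathOf π (m+1) = pathOf π₀ (m+1)
  · rw [if_pos hc, if_pos ((hiff π).mp hc)]
  · rw [if_neg hc, if_neg (fun h => hc ((hiff π).mpr h))]

end EdgeSum
section Extract
variable {α : Type*} [Fintype α] [DecidableEq α]

/-- The set of levels at which the paths of `π` and `πp` differ. -/
def diffSet (π πp : RankOrd α) : Set ℕ := {m | pathOf π m ≠ pathOf πp m}

lemma diffSet_bounds {π πp : RankOrd α} {m : ℕ} (h : m ∈ diffSet π πp) :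
    1 ≤ m ∧ m + 1 ≤ Fintype.card α := by
  have h' : pathOf π m ≠ pathOf πp m := h
  constructor
  · rcases Nat.eq_zero_or_pos m with rfl | h1
    · exact absurd (by rw [pathOf_zero, pathOf_zero]) h'
    · exact h1
  · by_contra hc
    have hge : Fintype.card α ≤ m := by omega
    exact h' (by rw [pathOf_of_le hge, pathOf_of_le hge])

lemma diffSet_nonempty {π πp : RankOrd α} (h : π ≠ πp) : (diffSet π πp).Nonempty := by
  by_contra hc
  rw [Set.not_nonempty_iff_eq_empty] at hc
  refine h (pathOf_inj (fun m => ?_))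
  by_contra hm
  have hmem : m ∈ diffSet π πp := hm
  rw [hc] at hmem
  exact hmem

/-- Main extraction: two distinct rationalizing distributions give two "positive-mass"
orders whose paths branch. -/
lemma exists_good {P : Finset α → α → ℝ} {ν₁ ν₂ : RankOrd α → ℝ}
    (h₁ : Rationalizes ν₁ P) (h₂ : Rationalizes ν₂ P) (hne : ν₁ ≠ ν₂) :
    ∃ π π' : RankOrd α, ν₁ π - ν₂ π ≠ 0 ∧ ν₁ π' - ν₂ π' ≠ 0 ∧
      ∃ p q, p + 2 ≤ q ∧ q ≤ Fintype.card α ∧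
        pathOf π p ≠ pathOf π' p ∧ pathOf π q ≠ pathOf π' q ∧
        ∀ m, p < m → m < q → pathOf π m = pathOf π' m := by
  classical
  set n := Fintype.card α with hn
  set δ : RankOrd α → ℝ := fun π => ν₁ π - ν₂ π with hδdef
  by_contra hno
  push_neg at hno
  obtain ⟨πp, hπp⟩ : ∃ π, δ π ≠ 0 := by
    obtain ⟨π, hπ⟩ := Function.ne_iff.mp hne
    exact ⟨π, sub_ne_zero.mpr hπ⟩
  have hsum : ∑ π : RankOrd α, δ π = 0 := by
    rw [hδdef]
    rw [Finset.sum_sub_distrib, h₁.1.2, h₂.1.2]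
    ring
  set D : RankOrd α → Set ℕ := fun π => diffSet π πp with hDdef
  set f : RankOrd α → ℕ := fun π => sInf (D π) with hfdef
  set g : RankOrd α → ℕ := fun π => Nat.findGreatest (· ∈ D π) n with hgdef
  have hgD : ∀ π : RankOrd α, π ≠ πp → g π ∈ D π := by
    intro π hππ
    obtain ⟨w, hw⟩ := diffSet_nonempty hππ
    have hwn : w ≤ n := by have := (diffSet_bounds hw).2; omega
    exact Nat.findGreatest_spec hwn hw
  have hgmax : ∀ π : RankOrd α, ∀ t, t ∈ D π → t ≤ g π := by
    intro π t ht
    have htn : t ≤ n := by have := (diffSet_bounds ht).2; omega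
    by_contra hc
    exact Nat.findGreatest_is_greatest (Nat.lt_of_not_le hc) htn ht
  have hfD : ∀ π : RankOrd α, π ≠ πp → f π ∈ D π := by
    intro π hππ
    exact Nat.sInf_mem (diffSet_nonempty hππ)
  -- contiguity
  have stepA : ∀ π : RankOrd α, δ π ≠ 0 → ∀ k l m : ℕ,
      k ∈ D π → l ∈ D π → k ≤ m → m ≤ l → m ∈ D π := by
    intro π hδπ k l m hk hl hkm hml
    by_contra hm
    have hkm' : k < m := lt_of_le_of_ne hkm (fun h => hm (h ▸ hk))
    have hml' : m < l := lt_of_le_of_ne hml (fun h => hm (h ▸ hl))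
    set p := Nat.findGreatest (· ∈ D π) m with hpdef
    have hpD : p ∈ D π := Nat.findGreatest_spec (le_of_lt hkm') hk
    have hple : p ≤ m := Nat.findGreatest_le m
    have hplt : p < m := lt_of_le_of_ne hple (fun h => hm (h ▸ hpD))
    have hqex : ∃ t, m ≤ t ∧ t ∈ D π := ⟨l, le_of_lt hml', hl⟩
    set q := Nat.find hqex with hqdef
    obtain ⟨hqm, hqD⟩ := Nat.find_spec hqex
    have hqlt : m < q := lt_of_le_of_ne hqm (fun h => hm (h ▸ hqD))
    obtain ⟨m', hm'1, hm'2, hm'3⟩ := hno π πp hδπ hπp p q (by omega)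
      (by have := (diffSet_bounds hqD).2; omega) hpD hqD
    have hm'D : m' ∈ D π := hm'3
    rcases le_or_gt m' m with hc | hc
    · exact Nat.findGreatest_is_greatest hm'1 hc hm'D
    · exact Nat.find_min hqex hm'2 ⟨le_of_lt hc, hm'D⟩
  -- no gaps between difference intervals
  have stepB : ∀ π π' : RankOrd α, δ π ≠ 0 → δ π' ≠ 0 → π ≠ πp → π' ≠ πp →
      f π' ≤ g π + 1 := by
    intro π π' hδπ hδπ' hππ hπ'π
    by_contra hgap
    push_neg at hgap
    have hgDπ := hgD π hππ
    have hfDπ' := hfD π' hπ'π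
    have hb1 := diffSet_bounds hgDπ
    have hb2 := diffSet_bounds hfDπ'
    obtain ⟨m, hm1, hm2, hm3⟩ := hno π π' hδπ hδπ' (g π) (f π') (by omega) (by omega)
      (by
        have e1 : pathOf π (g π) ≠ pathOf πp (g π) := hgDπ
        have e2 : pathOf π' (g π) = pathOf πp (g π) := by
          by_contra hc
          have hmem : g π ∈ D π' := hc
          have : f π' ≤ g π := Nat.sInf_le hmem
          omega
        rw [e2]; exact e1)
      (by
        have e1 : pathOf π' (f π') ≠ pathOf πp (f π') := hfDπ'
        have e2 : pathOf π (f π') = pathOf πp (f π') := by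
          by_contra hc
          have hmem : f π' ∈ D π := hc
          have := hgmax π _ hmem
          omega
        rw [e2]; exact fun h => e1 (h ▸ rfl))
    have e3 : pathOf π m = pathOf πp m := by
      by_contra hc
      have hmem : m ∈ D π := hc
      have := hgmax π _ hmem
      omega
    have e4 : pathOf π' m = pathOf πp m := by
      by_contra hc
      have hmem : m ∈ D π' := hc
      have : f π' ≤ m := Nat.sInf_le hmem
      omega
    exact hm3 (by rw [e3, e4])
  -- there is a second order with nonzero δ
  have stepC : ∃ π₁ : RankOrd α, δ π₁ ≠ 0 ∧ π₁ ≠ πp := by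
    by_contra hc
    push_neg at hc
    have : ∑ π : RankOrd α, δ π = δ πp := by
      apply Finset.sum_eq_single πp
      · intro b _ hb
        by_contra hb'
        exact hb (hc b hb')
      · intro h
        exact absurd (Finset.mem_univ πp) h
    rw [hsum] at this
    exact hπp this.symm
  -- choose the order with maximal first-difference level
  set T' : Finset (RankOrd α) := Finset.univ.filter (fun π => δ π ≠ 0 ∧ π ≠ πp) with hT'def
  have hT'ne : T'.Nonempty := by
    obtain ⟨π₁, h1, h2⟩ := stepC
    exact ⟨π₁, by simp [hT'def, h1, h2]⟩
  obtain ⟨π₀, hπ₀T, hπ₀max⟩ := Finset.exists_max_image T' f hT'ne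
  have hπ₀T' : δ π₀ ≠ 0 ∧ π₀ ≠ πp := by
    simpa [hT'def] using hπ₀T
  have hfπ₀D : f π₀ ∈ D π₀ := hfD π₀ hπ₀T'.2
  have hb := diffSet_bounds hfπ₀D
  obtain ⟨m₁, hm₁⟩ : ∃ m₁, f π₀ = m₁ + 1 := ⟨f π₀ - 1, by omega⟩
  have hedge := kernel_edge h₁ h₂ πp (m := m₁) (by omega)
  have hval : ∑ π : RankOrd α,
      (if pathOf π m₁ = pathOf πp m₁ ∧ pathOf π (m₁+1) = pathOf πp (m₁+1)
        then ν₁ π - ν₂ π else 0)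
      = (if pathOf πp m₁ = pathOf πp m₁ ∧ pathOf πp (m₁+1) = pathOf πp (m₁+1)
        then ν₁ πp - ν₂ πp else 0) := by
    apply Finset.sum_eq_single πp
    · intro b _ hb'
      by_cases hδb : δ b = 0
      · have : ν₁ b - ν₂ b = 0 := hδb
        rw [this]
        split_ifs <;> rfl
      · have hbT : b ∈ T' := by simp [hT'def, hδb, hb']
        have hfb : f b ≤ m₁ + 1 := by
          have := hπ₀max b hbT
          omega
        have hgb : m₁ + 1 ≤ g b + 1 := by
          have := stepB b π₀ hδb hπ₀T'.1 hb' hπ₀T'.2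
          omega
        have hcond : ¬(pathOf b m₁ = pathOf πp m₁ ∧
            pathOf b (m₁+1) = pathOf πp (m₁+1)) := by
          rcases lt_or_eq_of_le hgb with hlt | heq
          · -- m₁ + 1 ≤ g b, so m₁+1 ∈ D b by contiguity
            have : m₁ + 1 ∈ D b := stepA b hδb (f b) (g b) (m₁+1)
              (hfD b hb') (hgD b hb') hfb (by omega)
            exact fun h => this h.2
          · -- m₁ = g b ∈ D b
            have hm₁gb : m₁ = g b := by omega
            have : m₁ ∈ D b := hm₁gb ▸ hgD b hb'
            exact fun h => this h.1
        rw [if_neg hcond]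
    · intro h
      exact absurd (Finset.mem_univ πp) h
  rw [hval, if_pos ⟨rfl, rfl⟩] at hedge
  exact hπp hedge

end Extract
section Marginal
variable {α : Type*} [Fintype α] [DecidableEq α]

/-- The restriction of a ranking `π` on `α` to a subset `Y`, as a ranking of `↥Y`. -/
noncomputable def restrOrd (Y : Finset α) (π : RankOrd α) : RankOrd ↥Y := by
  have hcard : Fintype.card ↥Y = Y.card := Fintype.card_coe Y
  refine Equiv.ofBijective
    (fun y => ⟨(Y.filter (fun w => (π w : ℕ) < (π (y : α) : ℕ))).card, ?_⟩) ?_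
  · rw [hcard]
    apply Finset.card_lt_card
    rw [Finset.ssubset_iff_of_subset (Finset.filter_subset _ _)]
    exact ⟨(y : α), y.2, by simp⟩
  · rw [Fintype.bijective_iff_injective_and_card]
    refine ⟨?_, by rw [Fintype.card_fin, hcard]⟩
    intro u v huv
    have huv' : (Y.filter (fun w => (π w : ℕ) < (π (u : α) : ℕ))).card
        = (Y.filter (fun w => (π w : ℕ) < (π (v : α) : ℕ))).card := congrArg Fin.val huv
    by_contra hne
    have hne' : π (u : α) ≠ π (v : α) := by
      intro h
      exact hne (Subtype.ext (π.injective h))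
    have key : ∀ a b : ↥Y, (π (a : α) : ℕ) < (π (b : α) : ℕ) →
        (Y.filter (fun w => (π w : ℕ) < (π (a : α) : ℕ))).card <
        (Y.filter (fun w => (π w : ℕ) < (π (b : α) : ℕ))).card := by
      intro a b hab
      apply Finset.card_lt_card
      rw [Finset.ssubset_iff_of_subset]
      · exact ⟨(a : α), Finset.mem_filter.mpr ⟨a.2, hab⟩, by simp⟩
      · intro w hw
        rw [Finset.mem_filter] at hw ⊢
        exact ⟨hw.1, hw.2.trans hab⟩
    rcases Nat.lt_or_ge (π (u : α) : ℕ) (π (v : α) : ℕ) with h | h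
    · exact absurd huv' (Nat.ne_of_lt (key u v h))
    · have h' : (π (v : α) : ℕ) < (π (u : α) : ℕ) := by
        rcases Nat.lt_or_ge (π (v : α) : ℕ) (π (u : α) : ℕ) with h2 | h2
        · exact h2
        · exact absurd (Fin.ext (le_antisymm h h2)) (fun hh => hne' hh.symm)
      exact absurd huv'.symm (Nat.ne_of_lt (key v u h'))

lemma restrOrd_lt_iff (Y : Finset α) (π : RankOrd α) (u v : ↥Y) :
    (restrOrd Y π u : ℕ) < (restrOrd Y π v : ℕ) ↔ (π (u : α) : ℕ) < (π (v : α) : ℕ) := by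
  have key : ∀ a b : ↥Y, (π (a : α) : ℕ) < (π (b : α) : ℕ) →
      (restrOrd Y π a : ℕ) < (restrOrd Y π b : ℕ) := by
    intro a b hab
    show (Y.filter (fun w => (π w : ℕ) < (π (a : α) : ℕ))).card <
      (Y.filter (fun w => (π w : ℕ) < (π (b : α) : ℕ))).card
    apply Finset.card_lt_card
    rw [Finset.ssubset_iff_of_subset]
    · exact ⟨(a : α), Finset.mem_filter.mpr ⟨a.2, hab⟩, by simp⟩
    · intro w hw
      rw [Finset.mem_filter] at hw ⊢
      exact ⟨hw.1, hw.2.trans hab⟩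
  constructor
  · intro h
    rcases Nat.lt_or_ge (π (u : α) : ℕ) (π (v : α) : ℕ) with h1 | h1
    · exact h1
    · rcases Nat.lt_or_ge (π (v : α) : ℕ) (π (u : α) : ℕ) with h2 | h2
      · exact absurd h (Nat.not_lt.mpr (le_of_lt (key v u h2)))
      · have : u = v := Subtype.ext (π.injective (Fin.ext (le_antisymm h2 h1)))
        subst this
        exact absurd h (lt_irrefl _)
  · exact key u v

lemma restrOrd_max_iff (Y : Finset α) (π : RankOrd α) (B : Finset ↥Y) (x : ↥Y) :
    (∀ y ∈ B, y ≠ x → (restrOrd Y π y : ℕ) < (restrOrd Y π x : ℕ)) ↔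
      (∀ w ∈ B.map (Function.Embedding.subtype (· ∈ Y)), w ≠ (x : α) →
        (π w : ℕ) < (π (x : α) : ℕ)) := by
  constructor
  · intro h w hw hwx
    rw [Finset.mem_map] at hw
    obtain ⟨y, hy, rfl⟩ := hw
    have hyx : y ≠ x := fun hh => hwx (by rw [hh]; rfl)
    exact (restrOrd_lt_iff Y π y x).mp (h y hy hyx)
  · intro h y hy hyx
    rw [restrOrd_lt_iff]
    refine h (y : α) ?_ (fun hh => hyx (Subtype.ext hh))
    rw [Finset.mem_map]
    exact ⟨y, hy, rfl⟩

/-- The marginal of a distribution over rankings of `α` on the rankings of `↥Y`. -/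
noncomputable def marg (ν : RankOrd α → ℝ) (Y : Finset α) : RankOrd ↥Y → ℝ :=
  fun σ => ∑ π : RankOrd α, if restrOrd Y π = σ then ν π else 0

lemma marg_nonneg {ν : RankOrd α → ℝ} (hν : ∀ π, 0 ≤ ν π) (Y : Finset α)
    (σ : RankOrd ↥Y) : 0 ≤ marg ν Y σ := by
  apply Finset.sum_nonneg
  intro π _
  split_ifs
  · exact hν π
  · exact le_refl 0

lemma marg_ge {ν : RankOrd α → ℝ} (hν : ∀ π, 0 ≤ ν π) (Y : Finset α)
    (π₀ : RankOrd α) : ν π₀ ≤ marg ν Y (restrOrd Y π₀) := by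
  have h := Finset.single_le_sum (f := fun π : RankOrd α =>
      if restrOrd Y π = restrOrd Y π₀ then ν π else 0)
    (fun π _ => by split_ifs; exacts [hν π, le_refl 0]) (Finset.mem_univ π₀)
  simp at h; exact h

/-- The marginal of a rationalizing distribution rationalizes the restricted system. -/
lemma marg_rationalizes {P : Finset α → α → ℝ} {ν : RankOrd α → ℝ}
    (h : Rationalizes ν P) (Y : Finset α) :
    Rationalizes (marg ν Y)
      (fun B x => P (B.map (Function.Embedding.subtype (· ∈ Y))) ↑x) := by
  refine ⟨⟨marg_nonneg h.1.1 Y, ?_⟩, ?_⟩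
  · rw [show (1 : ℝ) = ∑ π : RankOrd α, ν π from h.1.2.symm]
    simp only [marg]
    rw [Finset.sum_comm]
    apply Finset.sum_congr rfl
    intro π _
    rw [Finset.sum_ite_eq Finset.univ (restrOrd Y π) (fun _ => ν π)]
    simp
  · intro B hB x hx
    have hxB : (x : α) ∈ B.map (Function.Embedding.subtype (· ∈ Y)) := by
      rw [Finset.mem_map]
      exact ⟨x, hx, rfl⟩
    have hBne : (B.map (Function.Embedding.subtype (· ∈ Y))).Nonempty := ⟨_, hxB⟩
    dsimp only
    rw [h.2 _ hBne (x : α) hxB, choiceProb, choiceProb]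
    have swap : ∑ σ : RankOrd ↥Y,
        (if ∀ y ∈ B, y ≠ x → (σ y : ℕ) < (σ x : ℕ) then marg ν Y σ else 0)
        = ∑ π : RankOrd α,
          (if ∀ y ∈ B, y ≠ x → (restrOrd Y π y : ℕ) < (restrOrd Y π x : ℕ)
            then ν π else 0) := by
      have step1 : ∀ σ : RankOrd ↥Y,
          (if ∀ y ∈ B, y ≠ x → (σ y : ℕ) < (σ x : ℕ) then marg ν Y σ else 0)
          = ∑ π : RankOrd α, (if ∀ y ∈ B, y ≠ x → (σ y : ℕ) < (σ x : ℕ)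
              then (if restrOrd Y π = σ then ν π else 0) else 0) := by
        intro σ
        split_ifs with hc
        · rfl
        · simp
      rw [Finset.sum_congr rfl (fun σ _ => step1 σ), Finset.sum_comm]
      apply Finset.sum_congr rfl
      intro π _
      have step2 : ∀ σ : RankOrd ↥Y,
          (if ∀ y ∈ B, y ≠ x → (σ y : ℕ) < (σ x : ℕ)
            then (if restrOrd Y π = σ then ν π else 0) else 0)
          = (if restrOrd Y π = σ
              then (if ∀ y ∈ B, y ≠ x → (σ y : ℕ) < (σ x : ℕ) then ν π else 0) else 0) := by
        intro σ
        split_ifs <;> rfl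
      rw [Finset.sum_congr rfl (fun σ _ => step2 σ),
        Finset.sum_ite_eq Finset.univ (restrOrd Y π)]
      simp only [Finset.mem_univ, if_true]
    rw [swap]
    apply Finset.sum_congr rfl
    intro π _
    rcases iff_iff_implies_and_implies.mp (restrOrd_max_iff Y π B x) with ⟨hmp, hmpr⟩
    split_ifs with hc hd hd
    · rfl
    · exact absurd (hmpr hc) hd
    · exact absurd (hmp hd) hc
    · rfl

end Marginal
section Perturb
variable {β : Type*} [Fintype β] [DecidableEq β]

lemma max_congr {σ τ : RankOrd β} {x : β} {B : Finset β}
    (h : ∀ y : β, ((σ y : ℕ) < (σ x : ℕ) ↔ (τ y : ℕ) < (τ x : ℕ))) :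
    (∀ y ∈ B, y ≠ x → (σ y : ℕ) < (σ x : ℕ)) ↔
      (∀ y ∈ B, y ≠ x → (τ y : ℕ) < (τ x : ℕ)) :=
  ⟨fun H y hy hne => (h y).mp (H y hy hne), fun H y hy hne => (h y).mpr (H y hy hne)⟩

/-- Perturbation: a four-element system carrying two positive-mass orders in
"double-swap" position is not uniquely rationalized. -/
lemma perturb (Q : Finset β → β → ℝ) (μ : RankOrd β → ℝ) (hQ : Rationalizes μ Q)
    (σ1 σ2 : RankOrd β) (a a' b b' : β)
    (hbb : b ≠ b')
    (hba : b ≠ a) (hba' : b ≠ a') (hb'a : b' ≠ a) (hb'a' : b' ≠ a')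
    (helem : ∀ y : β, y = a ∨ y = a' ∨ y = b ∨ y = b')
    (h11 : (σ1 b' : ℕ) < (σ1 b : ℕ)) (h12 : (σ1 b : ℕ) < (σ1 a : ℕ))
    (h13 : (σ1 a : ℕ) < (σ1 a' : ℕ))
    (h21 : (σ2 b : ℕ) < (σ2 b' : ℕ)) (h22 : (σ2 b' : ℕ) < (σ2 a' : ℕ))
    (h23 : (σ2 a' : ℕ) < (σ2 a : ℕ))
    (hp1 : 0 < μ σ1) (hp2 : 0 < μ σ2) :
    ∃ μ' : RankOrd β → ℝ, Rationalizes μ' Q ∧ μ' ≠ μ := by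
  classical
  set σ3 : RankOrd β := (Equiv.swap a a').trans σ1 with hσ3
  set σ4 : RankOrd β := (Equiv.swap b b').trans σ1 with hσ4
  have v3a : σ3 a = σ1 a' := by rw [hσ3]; simp [Equiv.trans_apply]
  have v3a' : σ3 a' = σ1 a := by rw [hσ3]; simp [Equiv.trans_apply]
  have v3b : σ3 b = σ1 b := by
    rw [hσ3]; simp [Equiv.trans_apply, Equiv.swap_apply_of_ne_of_ne hba hba']
  have v3b' : σ3 b' = σ1 b' := by
    rw [hσ3]; simp [Equiv.trans_apply, Equiv.swap_apply_of_ne_of_ne hb'a hb'a']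
  have v4a : σ4 a = σ1 a := by
    rw [hσ4]; simp [Equiv.trans_apply,
      Equiv.swap_apply_of_ne_of_ne (fun h => hba h.symm) (fun h => hb'a h.symm)]
  have v4a' : σ4 a' = σ1 a' := by
    rw [hσ4]; simp [Equiv.trans_apply,
      Equiv.swap_apply_of_ne_of_ne (fun h => hba' h.symm) (fun h => hb'a' h.symm)]
  have v4b : σ4 b = σ1 b' := by rw [hσ4]; simp [Equiv.trans_apply]
  have v4b' : σ4 b' = σ1 b := by rw [hσ4]; simp [Equiv.trans_apply]
  have hne12 : σ1 ≠ σ2 := by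
    intro h; rw [h] at h11; omega
  have hne13 : σ1 ≠ σ3 := by
    intro h
    have e : σ1 a = σ3 a := by rw [← h]
    rw [v3a] at e
    rw [e] at h13; omega
  have hne14 : σ1 ≠ σ4 := by
    intro h
    have e : σ1 b = σ4 b := by rw [← h]
    rw [v4b] at e
    rw [e] at h11; omega
  have hne23 : σ2 ≠ σ3 := by
    intro h
    have e1 : σ2 b = σ3 b := by rw [← h]
    have e2 : σ2 b' = σ3 b' := by rw [← h]
    rw [v3b] at e1; rw [v3b'] at e2
    rw [e1, e2] at h21; omega
  have hne24 : σ2 ≠ σ4 := by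
    intro h
    have e1 : σ2 a = σ4 a := by rw [← h]
    have e2 : σ2 a' = σ4 a' := by rw [← h]
    rw [v4a] at e1; rw [v4a'] at e2
    rw [e1, e2] at h23; omega
  set ε : ℝ := min (μ σ1) (μ σ2) with hε
  have hεpos : 0 < ε := lt_min hp1 hp2
  have hε1 : ε ≤ μ σ1 := min_le_left _ _
  have hε2 : ε ≤ μ σ2 := min_le_right _ _
  set μ' : RankOrd β → ℝ := fun σ => μ σ +
      ε * ((if σ = σ3 then (1:ℝ) else 0) + (if σ = σ4 then (1:ℝ) else 0)
        - (if σ = σ1 then (1:ℝ) else 0) - (if σ = σ2 then (1:ℝ) else 0)) with hμ'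
  have hμ'ne : μ' ≠ μ := by
    intro h
    have e : μ' σ1 = μ σ1 := by rw [h]
    rw [hμ'] at e
    dsimp only at e
    rw [if_neg hne13, if_neg hne14, if_pos rfl, if_neg hne12] at e
    have : ε = 0 := by linarith
    rw [this] at hεpos
    exact lt_irrefl _ hεpos
  refine ⟨μ', ⟨⟨?_, ?_⟩, ?_⟩, hμ'ne⟩
  · -- nonneg
    intro σ
    rw [hμ']
    dsimp only
    by_cases e1 : σ = σ1
    · have hεσ : ε ≤ μ σ := by rw [e1]; exact hε1
      rw [if_neg (fun h => hne13 (e1.symm.trans h)),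
        if_neg (fun h => hne14 (e1.symm.trans h)), if_pos e1,
        if_neg (fun h => hne12 (e1.symm.trans h))]
      linarith
    · by_cases e2 : σ = σ2
      · have hεσ : ε ≤ μ σ := by rw [e2]; exact hε2
        rw [if_neg (fun h => hne23 (e2.symm.trans h)),
          if_neg (fun h => hne24 (e2.symm.trans h)),
          if_neg (fun h => hne12 (h.symm.trans e2)), if_pos e2]
        linarith
      · rw [if_neg e1, if_neg e2]
        have h0 : (0:ℝ) ≤ (if σ = σ3 then (1:ℝ) else 0) := by positivity
        have h0' : (0:ℝ) ≤ (if σ = σ4 then (1:ℝ) else 0) := by positivity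
        have := hQ.1.1 σ
        nlinarith
  · -- total mass
    rw [hμ']
    dsimp only
    rw [Finset.sum_add_distrib, hQ.1.2, ← Finset.mul_sum]
    have hsum : ∑ σ : RankOrd β,
        ((if σ = σ3 then (1:ℝ) else 0) + (if σ = σ4 then (1:ℝ) else 0)
          - (if σ = σ1 then (1:ℝ) else 0) - (if σ = σ2 then (1:ℝ) else 0)) = 0 := by
      simp only [sub_eq_add_neg, Finset.sum_add_distrib, Finset.sum_neg_distrib]
      rw [Finset.sum_ite_eq' Finset.univ σ3 (fun _ => (1:ℝ)),
        Finset.sum_ite_eq' Finset.univ σ4 (fun _ => (1:ℝ)),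
        Finset.sum_ite_eq' Finset.univ σ1 (fun _ => (1:ℝ)),
        Finset.sum_ite_eq' Finset.univ σ2 (fun _ => (1:ℝ))]
      simp
    rw [hsum, mul_zero, add_zero]
  · -- choice probabilities
    intro B hB x hx
    rw [hQ.2 B hB x hx, choiceProb, choiceProb]
    set maxP : RankOrd β → Prop := fun σ => ∀ y ∈ B, y ≠ x → (σ y : ℕ) < (σ x : ℕ)
      with hmaxP
    have point : ∀ σ : RankOrd β, (if maxP σ then μ' σ else 0)
        = (if maxP σ then μ σ else 0)
          + ε * ((if σ = σ3 then (if maxP σ3 then (1:ℝ) else 0) else 0)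
            + (if σ = σ4 then (if maxP σ4 then (1:ℝ) else 0) else 0)
            - (if σ = σ1 then (if maxP σ1 then (1:ℝ) else 0) else 0)
            - (if σ = σ2 then (if maxP σ2 then (1:ℝ) else 0) else 0)) := by
      intro σ
      rw [hμ']
      dsimp only
      by_cases h : maxP σ
      · rw [if_pos h, if_pos h]
        have e : ∀ τ : RankOrd β,
            (if σ = τ then (if maxP τ then (1:ℝ) else 0) else 0)
            = (if σ = τ then (1:ℝ) else 0) := by
          intro τ
          by_cases hστ : σ = τ
          · subst hστ
            rw [if_pos rfl, if_pos rfl, if_pos h]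
          · rw [if_neg hστ, if_neg hστ]
        rw [e σ3, e σ4, e σ1, e σ2]
      · rw [if_neg h, if_neg h]
        have e : ∀ τ : RankOrd β,
            (if σ = τ then (if maxP τ then (1:ℝ) else 0) else 0) = 0 := by
          intro τ
          by_cases hστ : σ = τ
          · subst hστ
            rw [if_pos rfl, if_neg h]
          · rw [if_neg hστ]
        rw [e σ3, e σ4, e σ1, e σ2]
        ring
    rw [Finset.sum_congr rfl (fun σ _ => point σ), Finset.sum_add_distrib,
      ← Finset.mul_sum]
    have hsum2 : ∑ σ : RankOrd β,
        ((if σ = σ3 then (if maxP σ3 then (1:ℝ) else 0) else 0)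
          + (if σ = σ4 then (if maxP σ4 then (1:ℝ) else 0) else 0)
          - (if σ = σ1 then (if maxP σ1 then (1:ℝ) else 0) else 0)
          - (if σ = σ2 then (if maxP σ2 then (1:ℝ) else 0) else 0))
        = (if maxP σ3 then (1:ℝ) else 0) + (if maxP σ4 then (1:ℝ) else 0)
          - (if maxP σ1 then (1:ℝ) else 0) - (if maxP σ2 then (1:ℝ) else 0) := by
      simp only [sub_eq_add_neg, Finset.sum_add_distrib, Finset.sum_neg_distrib]
      rw [Finset.sum_ite_eq' Finset.univ σ3, Finset.sum_ite_eq' Finset.univ σ4,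
        Finset.sum_ite_eq' Finset.univ σ1, Finset.sum_ite_eq' Finset.univ σ2]
      simp
    rw [hsum2]
    have claim : (if maxP σ3 then (1:ℝ) else 0) + (if maxP σ4 then (1:ℝ) else 0)
        - (if maxP σ1 then (1:ℝ) else 0) - (if maxP σ2 then (1:ℝ) else 0) = 0 := by
      rcases helem x with rfl | rfl | rfl | rfl
      · -- x = a
        have e14 : maxP σ1 ↔ maxP σ4 := max_congr (fun y => by
          rcases helem y with rfl | rfl | rfl | rfl <;> simp only [v4a, v4a', v4b, v4b'] <;> omega)
        have e23 : maxP σ2 ↔ maxP σ3 := max_congr (fun y => by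
          rcases helem y with rfl | rfl | rfl | rfl <;> simp only [v3a, v3a', v3b, v3b'] <;> omega)
        rw [if_congr e14 rfl rfl, if_congr e23 rfl rfl]
        ring
      · -- x = a'
        have e14 : maxP σ1 ↔ maxP σ4 := max_congr (fun y => by
          rcases helem y with rfl | rfl | rfl | rfl <;> simp only [v4a, v4a', v4b, v4b'] <;> omega)
        have e23 : maxP σ2 ↔ maxP σ3 := max_congr (fun y => by
          rcases helem y with rfl | rfl | rfl | rfl <;> simp only [v3a, v3a', v3b, v3b'] <;> omega)
        rw [if_congr e14 rfl rfl, if_congr e23 rfl rfl]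
        ring
      · -- x = b
        have e13 : maxP σ1 ↔ maxP σ3 := max_congr (fun y => by
          rcases helem y with rfl | rfl | rfl | rfl <;> simp only [v3a, v3a', v3b, v3b'] <;> omega)
        have e24 : maxP σ2 ↔ maxP σ4 := max_congr (fun y => by
          rcases helem y with rfl | rfl | rfl | rfl <;> simp only [v4a, v4a', v4b, v4b'] <;> omega)
        rw [if_congr e13 rfl rfl, if_congr e24 rfl rfl]
        ring
      · -- x = b'
        have e13 : maxP σ1 ↔ maxP σ3 := max_congr (fun y => by
          rcases helem y with rfl | rfl | rfl | rfl <;> simp only [v3a, v3a', v3b, v3b'] <;> omega)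
        have e24 : maxP σ2 ↔ maxP σ4 := max_congr (fun y => by
          rcases helem y with rfl | rfl | rfl | rfl <;> simp only [v4a, v4a', v4b, v4b'] <;> omega)
        rw [if_congr e13 rfl rfl, if_congr e24 rfl rfl]
        ring
    rw [claim, mul_zero, add_zero]

end Perturb

/-- Reduction to four-element subsets: if a rationalizable system of choice probabilities
is not uniquely rationalized, then some four-element subset `Y ⊆ X` carries a restricted
system of choice probabilities that is rationalizable but not uniquely rationalized. -/
theorem reduction_to_four_element_subsets {α : Type*} [Fintype α] [DecidableEq α]
    (P : Finset α → α → ℝ) (hrat : ∃ ν : RankOrd α → ℝ, Rationalizes ν P)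
    (hnon : ¬ ∀ ν₁ ν₂ : RankOrd α → ℝ,
      Rationalizes ν₁ P → Rationalizes ν₂ P → ν₁ = ν₂) :
    ∃ Y : Finset α, Y.card = 4 ∧
      (∃ μ : RankOrd ↥Y → ℝ,
        Rationalizes μ (fun B x => P (B.map (Function.Embedding.subtype (· ∈ Y))) ↑x)) ∧
      ¬ ∀ μ₁ μ₂ : RankOrd ↥Y → ℝ,
        Rationalizes μ₁ (fun B x => P (B.map (Function.Embedding.subtype (· ∈ Y))) ↑x) →
        Rationalizes μ₂ (fun B x => P (B.map (Function.Embedding.subtype (· ∈ Y))) ↑x) →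
        μ₁ = μ₂ := by
  classical
  push_neg at hnon
  obtain ⟨ν₁, ν₂, hr1, hr2, hνne⟩ := hnon
  obtain ⟨π, π', hδ1, hδ2, p, q, hpq, hqn, hdp, hdq, hagree⟩ := exists_good hr1 hr2 hνne
  set n := Fintype.card α with hn
  obtain ⟨q₁, rfl⟩ : ∃ q₁, q = q₁ + 1 := ⟨q - 1, by omega⟩
  have hp_lt : p < n := by omega
  have hq₁_lt : q₁ < n := by omega
  have hpq₁ : p + 1 ≤ q₁ := by omega
  set a : α := π.symm ⟨n - p - 1, by omega⟩ with ha_def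
  set a' : α := π'.symm ⟨n - p - 1, by omega⟩ with ha'_def
  set b : α := π.symm ⟨n - q₁ - 1, by omega⟩ with hb_def
  set b' : α := π'.symm ⟨n - q₁ - 1, by omega⟩ with hb'_def
  have hra : (π a : ℕ) = n - p - 1 := by rw [ha_def, Equiv.apply_symm_apply]
  have hra' : (π' a' : ℕ) = n - p - 1 := by rw [ha'_def, Equiv.apply_symm_apply]
  have hrb : (π b : ℕ) = n - q₁ - 1 := by rw [hb_def, Equiv.apply_symm_apply]
  have hrb' : (π' b' : ℕ) = n - q₁ - 1 := by rw [hb'_def, Equiv.apply_symm_apply]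
  have hIa : pathOf π p = insert a (pathOf π (p+1)) := by
    rw [ha_def]; exact pathOf_insert π hp_lt
  have hIa' : pathOf π' p = insert a' (pathOf π' (p+1)) := by
    rw [ha'_def]; exact pathOf_insert π' hp_lt
  have hIb : pathOf π q₁ = insert b (pathOf π (q₁+1)) := by
    rw [hb_def]; exact pathOf_insert π hq₁_lt
  have hIb' : pathOf π' q₁ = insert b' (pathOf π' (q₁+1)) := by
    rw [hb'_def]; exact pathOf_insert π' hq₁_lt
  have hB : pathOf π (p+1) = pathOf π' (p+1) := hagree (p+1) (by omega) (by omega)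
  have hC : pathOf π q₁ = pathOf π' q₁ := hagree q₁ (by omega) (by omega)
  have haB : a ∉ pathOf π (p+1) := by rw [mem_pathOf, hra]; omega
  have ha'B' : a' ∉ pathOf π' (p+1) := by rw [mem_pathOf, hra']; omega
  have ha'B : a' ∉ pathOf π (p+1) := by rw [hB]; exact ha'B'
  have haB' : a ∉ pathOf π' (p+1) := by rw [← hB]; exact haB
  have hbC1 : b ∉ pathOf π (q₁+1) := by rw [mem_pathOf, hrb]; omega
  have hb'C1' : b' ∉ pathOf π' (q₁+1) := by rw [mem_pathOf, hrb']; omega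
  have hbq : b ∈ pathOf π q₁ := by rw [mem_pathOf, hrb]; omega
  have hb'q' : b' ∈ pathOf π' q₁ := by rw [mem_pathOf, hrb']; omega
  have hb'q : b' ∈ pathOf π q₁ := by rw [hC]; exact hb'q'
  have hbq' : b ∈ pathOf π' q₁ := by rw [← hC]; exact hbq
  have haa' : a ≠ a' := by
    intro h
    apply hdp
    rw [hIa, hIa', h, hB]
  have hbb' : b ≠ b' := by
    intro h
    apply hdq
    have e1 : pathOf π (q₁+1) = (pathOf π q₁).erase b := by
      rw [hIb, Finset.erase_insert hbC1]
    have e2 : pathOf π' (q₁+1) = (pathOf π' q₁).erase b' := by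
      rw [hIb', Finset.erase_insert hb'C1']
    rw [e1, e2, h, hC]
  -- ordering facts under π : a' > a > b > b'
  have cmp1 : (π a : ℕ) < (π a' : ℕ) := by
    have h1 : a' ∉ pathOf π p := by
      rw [hIa, Finset.mem_insert]
      push_neg
      exact ⟨fun h => haa' h.symm, ha'B⟩
    rw [mem_pathOf] at h1
    rw [hra]
    omega
  have cmp2 : (π b : ℕ) < (π a : ℕ) := by rw [hra, hrb]; omega
  have cmp3 : (π b' : ℕ) < (π b : ℕ) := by
    have h1 : (π b' : ℕ) < n - q₁ := by rw [← mem_pathOf]; exact hb'q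
    have h2 : (π b' : ℕ) ≠ (π b : ℕ) := fun h => hbb' ((π.injective (Fin.ext h))).symm
    rw [hrb]
    rw [hrb] at h2
    omega
  -- ordering facts under π' : a > a' > b' > b
  have cmp1' : (π' a' : ℕ) < (π' a : ℕ) := by
    have h1 : a ∉ pathOf π' p := by
      rw [hIa', Finset.mem_insert]
      push_neg
      exact ⟨haa', haB'⟩
    rw [mem_pathOf] at h1
    rw [hra']
    omega
  have cmp2' : (π' b' : ℕ) < (π' a' : ℕ) := by rw [hra', hrb']; omega
  have cmp3' : (π' b : ℕ) < (π' b' : ℕ) := by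
    have h1 : (π' b : ℕ) < n - q₁ := by rw [← mem_pathOf]; exact hbq'
    have h2 : (π' b : ℕ) ≠ (π' b' : ℕ) := fun h => hbb' (π'.injective (Fin.ext h))
    rw [hrb']
    rw [hrb'] at h2
    omega
  -- distinctness
  have hba : b ≠ a := by intro h; rw [h] at cmp2; omega
  have hba' : b ≠ a' := by intro h; rw [h] at cmp3'; omega
  have hb'a : b' ≠ a := by intro h; rw [h] at cmp3; omega
  have hb'a' : b' ≠ a' := by intro h; rw [h] at cmp2'; omega
  -- the four-element subset
  set Y : Finset α := insert a (insert a' (insert b {b'})) with hY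
  have hYcard : Y.card = 4 := by
    rw [hY]
    rw [Finset.card_insert_of_notMem, Finset.card_insert_of_notMem,
      Finset.card_insert_of_notMem, Finset.card_singleton]
    · simp only [Finset.mem_singleton]; exact hbb'
    · simp only [Finset.mem_insert, Finset.mem_singleton]
      push_neg
      exact ⟨fun h => hba' h.symm, fun h => hb'a' h.symm⟩
    · simp only [Finset.mem_insert, Finset.mem_singleton]
      push_neg
      exact ⟨haa', fun h => hba h.symm, fun h => hb'a h.symm⟩
  have hay : a ∈ Y := by rw [hY]; exact Finset.mem_insert_self _ _
  have ha'y : a' ∈ Y := by rw [hY]; simp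
  have hby : b ∈ Y := by rw [hY]; simp
  have hb'y : b' ∈ Y := by rw [hY]; simp
  set ya : ↥Y := ⟨a, hay⟩ with hya
  set ya' : ↥Y := ⟨a', ha'y⟩ with hya'
  set yb : ↥Y := ⟨b, hby⟩ with hyb
  set yb' : ↥Y := ⟨b', hb'y⟩ with hyb'
  have helem : ∀ y : ↥Y, y = ya ∨ y = ya' ∨ y = yb ∨ y = yb' := by
    intro y
    have h : (y : α) ∈ insert a (insert a' (insert b ({b'} : Finset α))) := y.2
    simp only [Finset.mem_insert, Finset.mem_singleton] at h
    rcases h with h | h | h | h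
    · exact Or.inl (Subtype.ext h)
    · exact Or.inr (Or.inl (Subtype.ext h))
    · exact Or.inr (Or.inr (Or.inl (Subtype.ext h)))
    · exact Or.inr (Or.inr (Or.inr (Subtype.ext h)))
  set σ1 : RankOrd ↥Y := restrOrd Y π with hσ1
  set σ2 : RankOrd ↥Y := restrOrd Y π' with hσ2
  have s11 : (σ1 yb' : ℕ) < (σ1 yb : ℕ) := (restrOrd_lt_iff Y π yb' yb).mpr cmp3
  have s12 : (σ1 yb : ℕ) < (σ1 ya : ℕ) := (restrOrd_lt_iff Y π yb ya).mpr cmp2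
  have s13 : (σ1 ya : ℕ) < (σ1 ya' : ℕ) := (restrOrd_lt_iff Y π ya ya').mpr cmp1
  have s21 : (σ2 yb : ℕ) < (σ2 yb' : ℕ) := (restrOrd_lt_iff Y π' yb yb').mpr cmp3'
  have s22 : (σ2 yb' : ℕ) < (σ2 ya' : ℕ) := (restrOrd_lt_iff Y π' yb' ya').mpr cmp2'
  have s23 : (σ2 ya' : ℕ) < (σ2 ya : ℕ) := (restrOrd_lt_iff Y π' ya' ya).mpr cmp1'
  have hm1 := marg_rationalizes hr1 Y
  have hm2 := marg_rationalizes hr2 Y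
  have hpos : ∀ ρ : RankOrd α, ν₁ ρ - ν₂ ρ ≠ 0 → (0 < ν₁ ρ ∨ 0 < ν₂ ρ) := by
    intro ρ h
    by_contra hc
    push_neg at hc
    have h1 := hr1.1.1 ρ
    have h2 := hr2.1.1 ρ
    have e1 : ν₁ ρ = 0 := le_antisymm hc.1 h1
    have e2 : ν₂ ρ = 0 := le_antisymm hc.2 h2
    rw [e1, e2] at h
    exact h (by ring)
  have hyne : yb ≠ yb' := fun h => hbb' (congrArg Subtype.val h)
  have hyba : yb ≠ ya := fun h => hba (congrArg Subtype.val h)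
  have hyba' : yb ≠ ya' := fun h => hba' (congrArg Subtype.val h)
  have hyb'a : yb' ≠ ya := fun h => hb'a (congrArg Subtype.val h)
  have hyb'a' : yb' ≠ ya' := fun h => hb'a' (congrArg Subtype.val h)
  by_cases hμeq : marg ν₁ Y = marg ν₂ Y
  · have hq1 : 0 < marg ν₁ Y σ1 := by
      rcases hpos π hδ1 with h | h
      · exact lt_of_lt_of_le h (marg_ge hr1.1.1 Y π)
      · rw [hμeq]
        exact lt_of_lt_of_le h (marg_ge hr2.1.1 Y π)
    have hq2 : 0 < marg ν₁ Y σ2 := by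
      rcases hpos π' hδ2 with h | h
      · exact lt_of_lt_of_le h (marg_ge hr1.1.1 Y π')
      · rw [hμeq]
        exact lt_of_lt_of_le h (marg_ge hr2.1.1 Y π')
    obtain ⟨μ', hμ'r, hμ'ne⟩ := perturb
      (fun B x => P (B.map (Function.Embedding.subtype (· ∈ Y))) ↑x)
      (marg ν₁ Y) hm1 σ1 σ2 ya ya' yb yb' hyne hyba hyba' hyb'a hyb'a' helem
      s11 s12 s13 s21 s22 s23 hq1 hq2
    refine ⟨Y, hYcard, ⟨marg ν₁ Y, hm1⟩, fun hall => hμ'ne (hall μ' (marg ν₁ Y) hμ'r hm1)⟩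
  · refine ⟨Y, hYcard, ⟨marg ν₁ Y, hm1⟩, fun hall => hμeq (hall _ _ hm1 hm2)⟩
end
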